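/- arXiv:1312.0150 — 3 statements merged into one kernel-verified Lean document; each statement's English description precedes it below -/
import Mathlib

section
/- Assume μ is quasi-definite, and define the matrix quasi-norms h^L_r := ∮_𝕋 P^L_{1,r}(z) dμ(z)/(iz) (P^L_{2,r}(z))† and h^R_r := ∮_𝕋 (P^R_{2,r}(z))† dμ(z)/(iz) P^R_{1,r}(z) for r ≥ 0. Then for every l ≥ 0 these quasi-norms coincide with Schur complements of the truncated CMV moment matrices: h^L_{2l} = D^L_{2l}, h^L_{2l+1} = D^R_{2l+1}, h^R_{2l} = D^R_{2l}, and h^R_{2l+1} = D^L_{2l+1}. -/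
noncomputable section

open scoped Matrix
open Finset

namespace MOLPUC

/-- `m × m` complex matrices. -/
abbrev Mm (m : ℕ) := Matrix (Fin m) (Fin m) ℂ

/-- An `m × m` matrix measure on the unit circle `𝕋`, modelled entrywise by the
integration functionals `f ↦ ∫_𝕋 f dμ_{cd}`. -/
abbrev MatMeas (m : ℕ) := Fin m → Fin m → ((Circle → ℂ) →ₗ[ℂ] ℂ)

variable {m : ℕ}

/-- The matrix integral `∮_𝕋 f(z) dμ(z)/(iz) g(z)`, with `(a,b)` entry
`Σ_{c,d} ∫_𝕋 f_{ac}(z) g_{db}(z) (iz)⁻¹ dμ_{cd}(z)`. -/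
def mInt (μ : MatMeas m) (f g : ℂ → Mm m) : Mm m :=
  Matrix.of fun a b => ∑ c, ∑ d,
    μ c d (fun z => f (z : ℂ) a c * g (z : ℂ) d b / (Complex.I * (z : ℂ)))

/-- CMV exponents: `n_0 = 0`, `n_{2k-1} = -k`, `n_{2k} = k`. -/
def nexp (j : ℕ) : ℤ := if j % 2 = 1 then -(((j + 1) / 2 : ℕ) : ℤ) else ((j / 2 : ℕ) : ℤ)

/-- CMV ordered Laurent monomials `χ^{(j)}(z) = z^{n_j}`. -/
def chi (j : ℕ) (z : ℂ) : ℂ := z ^ nexp j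

/-- The Laurent monomial `z^n` times the identity matrix. -/
def zmon (n : ℤ) : ℂ → Mm m := fun z => z ^ n • (1 : Mm m)

/-- The moments `c_n = (1/2π) ∮_𝕋 z^{-n} dμ(z)/(iz)`. -/
def moment (μ : MatMeas m) (n : ℤ) : Mm m :=
  ((2 * Real.pi : ℝ) : ℂ)⁻¹ • mInt μ (zmon (-n)) (fun _ => (1 : Mm m))

/-- Blocks of the left CMV moment matrix: `(g^L)_{ij} = 2π c_{n_j - n_i}`. -/
def gL (μ : MatMeas m) (i j : ℕ) : Mm m :=
  ((2 * Real.pi : ℝ) : ℂ) • moment μ (nexp j - nexp i)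

/-- Blocks of the right CMV moment matrix: `(g^R)_{ij} = 2π c_{n_i - n_j}`. -/
def gR (μ : MatMeas m) (i j : ℕ) : Mm m :=
  ((2 * Real.pi : ℝ) : ℂ) • moment μ (nexp i - nexp j)

/-- The `ml × ml` leading principal truncation of a semi-infinite block matrix. -/
def trunc (g : ℕ → ℕ → Mm m) (l : ℕ) : Matrix (Fin l × Fin m) (Fin l × Fin m) ℂ :=
  Matrix.of fun p q => g p.1 q.1 p.2 q.2

/-- The `(i,j)`-th `m × m` block of the inverse of the truncated matrix. -/
def invBlk (g : ℕ → ℕ → Mm m) (l : ℕ) (i j : Fin l) : Mm m :=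
  Matrix.of fun a b => (trunc g l)⁻¹ (i, a) (j, b)

/-- Quasi-definiteness: all leading principal block truncations of both CMV moment
matrices are invertible. -/
def QuasiDefinite (μ : MatMeas m) : Prop :=
  ∀ l : ℕ, 1 ≤ l → IsUnit (trunc (gL μ) l) ∧ IsUnit (trunc (gR μ) l)

/-- The Schur complement `D^L_l`. -/
def DL (μ : MatMeas m) (l : ℕ) : Mm m :=
  gL μ l l - ∑ i : Fin l, ∑ j : Fin l, gL μ l i * invBlk (gL μ) l i j * gL μ j l

/-- The Schur complement `D^R_l`. -/
def DR (μ : MatMeas m) (l : ℕ) : Mm m :=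
  gR μ l l - ∑ i : Fin l, ∑ j : Fin l, gR μ l i * invBlk (gR μ) l i j * gR μ j l

/-- The quasi-norms `h^L_{2l} = D^L_{2l}`, `h^L_{2l+1} = D^R_{2l+1}`. -/
def hLn (μ : MatMeas m) (l : ℕ) : Mm m := if l % 2 = 0 then DL μ l else DR μ l

/-- The quasi-norms `h^R_{2l} = D^R_{2l}`, `h^R_{2l+1} = D^L_{2l+1}`. -/
def hRn (μ : MatMeas m) (l : ℕ) : Mm m := if l % 2 = 0 then DR μ l else DL μ l

/-- The CMV matrix Laurent polynomial `φ₁^{L,(l)}`. -/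
def phiL (μ : MatMeas m) (l : ℕ) (z : ℂ) : Mm m :=
  chi l z • (1 : Mm m) -
    ∑ i : Fin l, ∑ j : Fin l, chi j z • (gL μ l i * invBlk (gL μ) l i j)

/-- The CMV matrix Laurent polynomial `ψ^{L,(l)}`. -/
def psiL (μ : MatMeas m) (l : ℕ) (z : ℂ) : Mm m :=
  (chi l z⁻¹ • (1 : Mm m) -
    ∑ i : Fin l, ∑ j : Fin l, chi i z⁻¹ • (invBlk (gL μ) l i j * gL μ j l)) * (DL μ l)⁻¹

/-- The CMV matrix Laurent polynomial `φ₁^{R,(l)}`. -/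
def phiR (μ : MatMeas m) (l : ℕ) (z : ℂ) : Mm m :=
  (chi l z • (1 : Mm m) -
    ∑ i : Fin l, ∑ j : Fin l, chi i z • (invBlk (gR μ) l i j * gR μ j l)) * (DR μ l)⁻¹

/-- The CMV matrix Laurent polynomial `ψ^{R,(l)}`. -/
def psiR (μ : MatMeas m) (l : ℕ) (z : ℂ) : Mm m :=
  chi l z⁻¹ • (1 : Mm m) -
    ∑ i : Fin l, ∑ j : Fin l, chi j z⁻¹ • (gR μ l i * invBlk (gR μ) l i j)

/-- Evaluation of a matrix polynomial of degree `l` with coefficients `p`. -/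
def pev (p : ℕ → Mm m) (l : ℕ) (z : ℂ) : Mm m := ∑ j ∈ Finset.range (l + 1), z ^ j • p j

/-- The reversed polynomial `P*(z) = Σ_j (p_{l-j})† z^j`. -/
def pstar (p : ℕ → Mm m) (l : ℕ) (z : ℂ) : Mm m :=
  ∑ j ∈ Finset.range (l + 1), z ^ j • (p (l - j))ᴴ

/-- `p` is the coefficient family of a monic matrix polynomial of degree `l`. -/
def MonicDeg (p : ℕ → Mm m) (l : ℕ) : Prop := p l = 1 ∧ ∀ j, l < j → p j = 0

/-- `P l` is the coefficient family of the matrix Szegő polynomial `P^L_{1,l}`. -/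
def IsSzL1 (μ : MatMeas m) (P : ℕ → ℕ → Mm m) : Prop :=
  ∀ l, MonicDeg (P l) l ∧ ∀ j < l, mInt μ (pev (P l) l) (zmon (-(j : ℤ))) = 0

/-- `P l` is the coefficient family of the matrix Szegő polynomial `P^L_{2,l}`. -/
def IsSzL2 (μ : MatMeas m) (P : ℕ → ℕ → Mm m) : Prop :=
  ∀ l, MonicDeg (P l) l ∧
    ∀ j < l, mInt μ (zmon (j : ℤ)) (fun z => (pev (P l) l z)ᴴ) = 0

/-- `P l` is the coefficient family of the matrix Szegő polynomial `P^R_{1,l}`. -/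
def IsSzR1 (μ : MatMeas m) (P : ℕ → ℕ → Mm m) : Prop :=
  ∀ l, MonicDeg (P l) l ∧ ∀ j < l, mInt μ (zmon (-(j : ℤ))) (pev (P l) l) = 0

/-- `P l` is the coefficient family of the matrix Szegő polynomial `P^R_{2,l}`. -/
def IsSzR2 (μ : MatMeas m) (P : ℕ → ℕ → Mm m) : Prop :=
  ∀ l, MonicDeg (P l) l ∧
    ∀ j < l, mInt μ (fun z => (pev (P l) l z)ᴴ) (zmon (j : ℤ)) = 0

/-- The Verblunsky matrix of a matrix polynomial: its value at `0`. -/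
def verb (p : ℕ → Mm m) (l : ℕ) : Mm m := pev p l 0

/-- The Christoffel–Darboux kernel `k^{L,[l]}`. -/
def kL (μ : MatMeas m) (l : ℕ) (v u : ℂ) : Mm m :=
  ∑ j ∈ Finset.range l, psiL μ j v * phiL μ j u

/-- The Christoffel–Darboux kernel `k^{R,[l]}`. -/
def kR (μ : MatMeas m) (l : ℕ) (u v : ℂ) : Mm m :=
  ∑ j ∈ Finset.range l, phiR μ j u * psiR μ j v

/-- Pointwise multiplication by a fixed function, as a linear map. -/
def mulFun (h : Circle → ℂ) : (Circle → ℂ) →ₗ[ℂ] (Circle → ℂ) where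
  toFun f := fun z => h z * f z
  map_add' f g := by funext z; simp [mul_add]
  map_smul' c f := by funext z; simp [Pi.smul_apply, smul_eq_mul]; ring

/-- The Miwa-shifted matrix measure `dM^{L,±}_w[μ](z) = (I - w z^{±1}) dμ(z)`
for a diagonal matrix `w = diag(w_1, …, w_m)`; `e = ±1`. -/
def miwaL (w : Fin m → ℂ) (e : ℤ) (μ : MatMeas m) : MatMeas m :=
  fun c d => (μ c d).comp (mulFun fun z => 1 - w c * (z : ℂ) ^ e)

/-- The Miwa-shifted matrix measure `dM^{R,±}_w[μ](z) = dμ(z) (I - w z^{±1})`. -/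
def miwaR (w : Fin m → ℂ) (e : ℤ) (μ : MatMeas m) : MatMeas m :=
  fun c d => (μ c d).comp (mulFun fun z => 1 - w d * (z : ℂ) ^ e)

/-- The scalar Miwa-shifted matrix measure `dM^{±}_w[μ](z) = (1 - w z^{±1}) dμ(z)`. -/
def miwaS (w : ℂ) (e : ℤ) (μ : MatMeas m) : MatMeas m :=
  fun c d => (μ c d).comp (mulFun fun z => 1 - w * (z : ℂ) ^ e)

/-- The deformed matrix measure `dμ_t(z) = exp(t z^{-1}) dμ(z)`. -/
def expShift (t : ℝ) (μ : MatMeas m) : MatMeas m :=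
  fun c d => (μ c d).comp (mulFun fun z => Complex.exp ((t : ℂ) * ((z : ℂ))⁻¹))

end MOLPUC

namespace MOLPUCAux
open MOLPUC

variable {m : ℕ}

def idxOf (n : ℤ) : ℕ := if 0 ≤ n then 2 * n.toNat else 2 * (-n).toNat - 1

lemma nexp_idxOf (n : ℤ) : nexp (idxOf n) = n := by
  unfold nexp idxOf; split_ifs <;> omega

lemma idxOf_nexp (i : ℕ) : idxOf (nexp i) = i := by
  unfold nexp idxOf; split_ifs <;> omega

lemma nexp_double (l : ℕ) : nexp (2 * l) = (l : ℤ) := by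
  unfold nexp; split_ifs <;> omega

lemma nexp_odd' (l : ℕ) : nexp (2 * l + 1) = -((l : ℤ) + 1) := by
  unfold nexp; split_ifs <;> omega

lemma sum_reindex_even {M : Type*} [AddCommMonoid M] (l : ℕ) (F : ℤ → M) :
    ∑ j ∈ Finset.range (2 * l + 1), F (j : ℤ)
      = ∑ i ∈ Finset.range (2 * l + 1), F ((l : ℤ) + nexp i) := by
  refine Finset.sum_nbij' (fun j => idxOf ((j : ℤ) - l))
    (fun i => ((l : ℤ) + nexp i).toNat) ?_ ?_ ?_ ?_ ?_
  · intro j hj; simp only [Finset.mem_range] at *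
    unfold idxOf; split_ifs <;> omega
  · intro i hi; simp only [Finset.mem_range] at *
    have : -(l:ℤ) ≤ nexp i ∧ nexp i ≤ l := by unfold nexp; split_ifs <;> omega
    omega
  · intro j hj; rw [nexp_idxOf]; omega
  · intro i hi; simp only [Finset.mem_range] at hi
    have h1 : -(l:ℤ) ≤ nexp i := by unfold nexp; split_ifs <;> omega
    have h2 : (((l:ℤ) + nexp i).toNat : ℤ) = (l:ℤ) + nexp i := by omega
    rw [h2]
    have : (l:ℤ) + nexp i - l = nexp i := by ring
    rw [this, idxOf_nexp]
  · intro j hj; rw [nexp_idxOf]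
    congr 1; ring

lemma sum_reindex_odd {M : Type*} [AddCommMonoid M] (l : ℕ) (F : ℤ → M) :
    ∑ j ∈ Finset.range (2 * l + 2), F (j : ℤ)
      = ∑ i ∈ Finset.range (2 * l + 2), F ((l : ℤ) - nexp i) := by
  refine Finset.sum_nbij' (fun j => idxOf ((l : ℤ) - j))
    (fun i => ((l : ℤ) - nexp i).toNat) ?_ ?_ ?_ ?_ ?_
  · intro j hj; simp only [Finset.mem_range] at *
    unfold idxOf; split_ifs <;> omega
  · intro i hi; simp only [Finset.mem_range] at *
    have : -((l:ℤ)+1) ≤ nexp i ∧ nexp i ≤ l := by unfold nexp; split_ifs <;> omega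
    omega
  · intro j hj; rw [nexp_idxOf]; omega
  · intro i hi; simp only [Finset.mem_range] at hi
    have h1 : nexp i ≤ (l:ℤ) := by unfold nexp; split_ifs <;> omega
    have h2 : (((l:ℤ) - nexp i).toNat : ℤ) = (l:ℤ) - nexp i := by omega
    rw [h2]
    have : (l:ℤ) - ((l:ℤ) - nexp i) = nexp i := by ring
    rw [this, idxOf_nexp]
  · intro j hj; rw [nexp_idxOf]
    congr 1; ring

end MOLPUCAux

namespace MOLPUCAux2
open MOLPUC Finset

variable {m : ℕ}

lemma triple_comm {M : Type*} [AddCommMonoid M] {ι : Type*} (s : Finset ι)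
    (E : Fin m → Fin m → ι → M) :
    ∑ c : Fin m, ∑ d : Fin m, ∑ k ∈ s, E c d k
      = ∑ k ∈ s, ∑ c : Fin m, ∑ d : Fin m, E c d k :=
  calc ∑ c : Fin m, ∑ d : Fin m, ∑ k ∈ s, E c d k
      = ∑ c : Fin m, ∑ k ∈ s, ∑ d : Fin m, E c d k :=
        Finset.sum_congr rfl fun c _ => Finset.sum_comm
    _ = ∑ k ∈ s, ∑ c : Fin m, ∑ d : Fin m, E c d k := Finset.sum_comm

lemma mInt_congr (μ : MatMeas m) {f f' g g' : ℂ → Mm m}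
    (hf : ∀ z : Circle, f (z : ℂ) = f' (z : ℂ))
    (hg : ∀ z : Circle, g (z : ℂ) = g' (z : ℂ)) :
    mInt μ f g = mInt μ f' g' := by
  ext a b
  simp only [mInt, Matrix.of_apply]
  refine Finset.sum_congr rfl fun c _ => Finset.sum_congr rfl fun d _ => ?_
  congr 1
  funext z
  rw [hf z, hg z]

lemma mInt_sum_right (μ : MatMeas m) (f : ℂ → Mm m) {ι : Type*} (s : Finset ι)
    (g : ι → ℂ → Mm m) :
    mInt μ f (fun z => ∑ k ∈ s, g k z) = ∑ k ∈ s, mInt μ f (g k) := by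
  ext a b
  simp only [mInt, Matrix.of_apply, Matrix.sum_apply]
  have key : ∀ c d : Fin m,
      μ c d (fun z => f (z : ℂ) a c * (∑ k ∈ s, g k (z : ℂ) d b) / (Complex.I * (z : ℂ)))
        = ∑ k ∈ s, μ c d (fun z => f (z : ℂ) a c * g k (z : ℂ) d b / (Complex.I * (z : ℂ))) := by
    intro c d
    have h2 : (fun z : Circle => f (z:ℂ) a c * (∑ k ∈ s, g k (z:ℂ) d b) / (Complex.I * (z:ℂ)))
        = ∑ k ∈ s, (fun z : Circle => f (z:ℂ) a c * g k (z:ℂ) d b / (Complex.I * (z:ℂ))) := by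
      funext z
      rw [Finset.sum_apply, Finset.mul_sum, Finset.sum_div]
    rw [h2, map_sum]
  simp_rw [key]
  exact triple_comm _ _

lemma mInt_sum_left (μ : MatMeas m) {ι : Type*} (s : Finset ι)
    (f : ι → ℂ → Mm m) (g : ℂ → Mm m) :
    mInt μ (fun z => ∑ k ∈ s, f k z) g = ∑ k ∈ s, mInt μ (f k) g := by
  ext a b
  simp only [mInt, Matrix.of_apply, Matrix.sum_apply]
  have key : ∀ c d : Fin m,
      μ c d (fun z => (∑ k ∈ s, f k (z : ℂ) a c) * g (z : ℂ) d b / (Complex.I * (z : ℂ)))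
        = ∑ k ∈ s, μ c d (fun z => f k (z : ℂ) a c * g (z : ℂ) d b / (Complex.I * (z : ℂ))) := by
    intro c d
    have h2 : (fun z : Circle => (∑ k ∈ s, f k (z:ℂ) a c) * g (z:ℂ) d b / (Complex.I * (z:ℂ)))
        = ∑ k ∈ s, (fun z : Circle => f k (z:ℂ) a c * g (z:ℂ) d b / (Complex.I * (z:ℂ))) := by
      funext z
      rw [Finset.sum_apply, Finset.sum_mul, Finset.sum_div]
    rw [h2, map_sum]
  simp_rw [key]
  exact triple_comm _ _

lemma mInt_smul_right (μ : MatMeas m) (f : ℂ → Mm m) (s : ℂ → ℂ) (A : Mm m) :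
    mInt μ f (fun z => s z • A) = mInt μ f (fun z => s z • (1 : Mm m)) * A := by
  ext a b
  simp only [mInt, Matrix.of_apply, Matrix.mul_apply, Matrix.smul_apply, smul_eq_mul]
  have pull : ∀ (c d : Fin m) (k : ℂ),
      μ c d (fun z => f (z : ℂ) a c * (s (z : ℂ) * k) / (Complex.I * (z : ℂ)))
        = k * μ c d (fun z => f (z : ℂ) a c * s (z : ℂ) / (Complex.I * (z : ℂ))) := by
    intro c d k
    rw [← smul_eq_mul, ← map_smul]
    congr 1
    funext z
    simp only [Pi.smul_apply, smul_eq_mul]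
    ring
  simp_rw [pull, Matrix.one_apply]
  simp only [ite_mul, one_mul, zero_mul, Finset.sum_ite_eq', Finset.mem_univ, if_true]
  rw [Finset.sum_comm]
  refine Finset.sum_congr rfl fun d _ => ?_
  rw [Finset.sum_mul]
  exact Finset.sum_congr rfl fun c _ => mul_comm _ _

lemma mInt_smul_left (μ : MatMeas m) (s : ℂ → ℂ) (A : Mm m) (g : ℂ → Mm m) :
    mInt μ (fun z => s z • A) g = A * mInt μ (fun z => s z • (1 : Mm m)) g := by
  ext a b
  simp only [mInt, Matrix.of_apply, Matrix.mul_apply, Matrix.smul_apply, smul_eq_mul]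
  have pull : ∀ (c d : Fin m) (k : ℂ),
      μ c d (fun z => s (z : ℂ) * k * g (z : ℂ) d b / (Complex.I * (z : ℂ)))
        = k * μ c d (fun z => s (z : ℂ) * g (z : ℂ) d b / (Complex.I * (z : ℂ))) := by
    intro c d k
    rw [← smul_eq_mul, ← map_smul]
    congr 1
    funext z
    simp only [Pi.smul_apply, smul_eq_mul]
    ring
  simp_rw [pull, Matrix.one_apply]
  simp only [mul_ite, mul_one, mul_zero, Finset.mul_sum]
  simp [Finset.sum_ite_eq, Finset.sum_ite_eq']

end MOLPUCAux2

namespace MOLPUCAux2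
open MOLPUC Finset

variable {m : ℕ}

lemma mInt_entry_basic (μ : MatMeas m) (s t : ℂ → ℂ) (a' b' : Fin m) :
    mInt μ (fun z => s z • (1 : Mm m)) (fun z => t z • (1 : Mm m)) a' b'
      = μ a' b' (fun z => s (z : ℂ) * t (z : ℂ) / (Complex.I * (z : ℂ))) := by
  simp only [mInt, Matrix.of_apply, Matrix.smul_apply, Matrix.one_apply, smul_eq_mul]
  have pull : ∀ c d : Fin m,
      (fun z : Circle => s (z:ℂ) * (if a' = c then (1:ℂ) else 0)
          * (t (z:ℂ) * (if d = b' then (1:ℂ) else 0)) / (Complex.I * (z:ℂ)))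
        = ((if a' = c then (1:ℂ) else 0) * (if d = b' then (1:ℂ) else 0))
            • (fun z : Circle => s (z:ℂ) * t (z:ℂ) / (Complex.I * (z:ℂ))) := by
    intro c d
    funext z
    simp only [Pi.smul_apply, smul_eq_mul]
    ring
  simp_rw [pull, map_smul, smul_eq_mul]
  simp [Finset.sum_ite_eq, Finset.sum_ite_eq', Finset.mul_sum, ite_mul, mul_ite]

lemma two_pi_ne : ((2 * Real.pi : ℝ) : ℂ) ≠ 0 := by
  simp [Real.pi_ne_zero]

lemma mInt_zmon_zmon (μ : MatMeas m) (a b : ℤ) :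
    mInt μ (zmon a) (zmon b)
      = ((2 * Real.pi : ℝ) : ℂ) • moment μ (-(a + b)) := by
  ext a' b'
  have h1 : mInt μ (zmon a) (zmon b) a' b'
      = μ a' b' (fun z => (z:ℂ) ^ a * (z:ℂ) ^ b / (Complex.I * (z:ℂ))) :=
    mInt_entry_basic μ (fun z => z ^ a) (fun z => z ^ b) a' b'
  have h2 : moment μ (-(a + b)) a' b'
      = ((2 * Real.pi : ℝ) : ℂ)⁻¹ * μ a' b'
          (fun z => (z:ℂ) ^ (a + b) * 1 / (Complex.I * (z:ℂ))) := by
    have hconst : (fun _ : ℂ => (1 : Mm m)) = fun z : ℂ => (1:ℂ) • (1 : Mm m) := by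
      funext z; rw [one_smul]
    simp only [moment, Matrix.smul_apply, smul_eq_mul, hconst, neg_neg]
    show ((2 * Real.pi : ℝ) : ℂ)⁻¹ * mInt μ (fun z : ℂ => z ^ (a + b) • (1 : Mm m))
      (fun z : ℂ => (1:ℂ) • (1 : Mm m)) a' b' = _
    rw [mInt_entry_basic μ (fun z => z ^ (a + b)) (fun _ => (1:ℂ)) a' b']
  rw [Matrix.smul_apply, h1, h2, smul_eq_mul, ← mul_assoc,
    mul_inv_cancel₀ two_pi_ne, one_mul]
  congr 1
  funext z
  rw [mul_one, zpow_add₀ z.coe_ne_zero]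

lemma expand_left (μ : MatMeas m) (p : ℕ → Mm m) (r : ℕ) (s : ℤ) :
    mInt μ (pev p r) (zmon s)
      = ∑ j ∈ range (r + 1),
          p j * (((2 * Real.pi : ℝ) : ℂ) • moment μ (-((j : ℤ) + s))) := by
  have h0 : mInt μ (pev p r) (zmon s)
      = mInt μ (fun z => ∑ j ∈ range (r + 1), (z ^ (j : ℤ)) • p j) (zmon s) := by
    refine mInt_congr μ (fun z => ?_) (fun _ => rfl)
    show pev p r (z : ℂ) = _
    unfold pev
    refine Finset.sum_congr rfl fun j _ => ?_
    rw [zpow_natCast]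
  rw [h0, mInt_sum_left]
  refine Finset.sum_congr rfl fun j _ => ?_
  rw [mInt_smul_left μ (fun z => z ^ (j : ℤ)) (p j) (zmon s)]
  congr 1
  exact mInt_zmon_zmon μ (j : ℤ) s

lemma expand_conj (μ : MatMeas m) (p : ℕ → Mm m) (r : ℕ) (s : ℤ) :
    mInt μ (fun z => (pev p r z)ᴴ) (zmon s)
      = ∑ j ∈ range (r + 1),
          (p j)ᴴ * (((2 * Real.pi : ℝ) : ℂ) • moment μ (-(-(j : ℤ) + s))) := by
  have h0 : mInt μ (fun z => (pev p r z)ᴴ) (zmon s)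
      = mInt μ (fun z => ∑ j ∈ range (r + 1), (z ^ (-(j : ℤ))) • (p j)ᴴ) (zmon s) := by
    refine mInt_congr μ (fun z => ?_) (fun _ => rfl)
    show (pev p r (z : ℂ))ᴴ = _
    unfold pev
    rw [Matrix.conjTranspose_sum]
    refine Finset.sum_congr rfl fun j _ => ?_
    rw [Matrix.conjTranspose_smul]
    congr 1
    rw [star_pow, Complex.star_def, ← Circle.coe_inv_eq_conj, Circle.coe_inv,
      inv_pow, ← zpow_natCast (z:ℂ), ← zpow_neg]
  rw [h0, mInt_sum_left]
  refine Finset.sum_congr rfl fun j _ => ?_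
  rw [mInt_smul_left μ (fun z => z ^ (-(j : ℤ))) ((p j)ᴴ) (zmon s)]
  congr 1
  exact mInt_zmon_zmon μ (-(j : ℤ)) s

lemma peel_conj (μ : MatMeas m) (f : ℂ → Mm m) (p2 : ℕ → Mm m) (r : ℕ)
    (hmon : p2 r = 1)
    (horth : ∀ j : ℕ, j < r → mInt μ f (zmon (-(j : ℤ))) = 0) :
    mInt μ f (fun z => (pev p2 r z)ᴴ) = mInt μ f (zmon (-(r : ℤ))) := by
  have h0 : mInt μ f (fun z => (pev p2 r z)ᴴ)
      = mInt μ f (fun z => ∑ j ∈ range (r + 1), (z ^ (-(j : ℤ))) • (p2 j)ᴴ) := by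
    refine mInt_congr μ (fun _ => rfl) (fun z => ?_)
    show (pev p2 r (z : ℂ))ᴴ = _
    unfold pev
    rw [Matrix.conjTranspose_sum]
    refine Finset.sum_congr rfl fun j _ => ?_
    rw [Matrix.conjTranspose_smul]
    congr 1
    rw [star_pow, Complex.star_def, ← Circle.coe_inv_eq_conj, Circle.coe_inv,
      inv_pow, ← zpow_natCast (z:ℂ), ← zpow_neg]
  rw [h0, mInt_sum_right, Finset.sum_range_succ]
  have hz : ∀ j ∈ range r, mInt μ f (fun z => (z ^ (-(j : ℤ))) • (p2 j)ᴴ) = 0 := by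
    intro j hj
    rw [mInt_smul_right μ f (fun z => z ^ (-(j : ℤ))) ((p2 j)ᴴ)]
    have : mInt μ f (fun z => (z ^ (-(j : ℤ))) • (1 : Mm m)) = 0 :=
      horth j (mem_range.mp hj)
    rw [this, Matrix.zero_mul]
  rw [Finset.sum_eq_zero hz, zero_add,
    mInt_smul_right μ f (fun z => z ^ (-(r : ℤ))) ((p2 r)ᴴ), hmon,
    Matrix.conjTranspose_one, Matrix.mul_one]
  rfl

lemma peel_plain (μ : MatMeas m) (f : ℂ → Mm m) (p1 : ℕ → Mm m) (r : ℕ)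
    (hmon : p1 r = 1)
    (horth : ∀ j : ℕ, j < r → mInt μ f (zmon (j : ℤ)) = 0) :
    mInt μ f (pev p1 r) = mInt μ f (zmon (r : ℤ)) := by
  have h0 : mInt μ f (pev p1 r)
      = mInt μ f (fun z => ∑ j ∈ range (r + 1), (z ^ (j : ℤ)) • p1 j) := by
    refine mInt_congr μ (fun _ => rfl) (fun z => ?_)
    show pev p1 r (z : ℂ) = _
    unfold pev
    refine Finset.sum_congr rfl fun j _ => ?_
    rw [zpow_natCast]
  rw [h0, mInt_sum_right, Finset.sum_range_succ]
  have hz : ∀ j ∈ range r, mInt μ f (fun z => (z ^ (j : ℤ)) • p1 j) = 0 := by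
    intro j hj
    rw [mInt_smul_right μ f (fun z => z ^ (j : ℤ)) (p1 j)]
    have : mInt μ f (fun z => (z ^ (j : ℤ)) • (1 : Mm m)) = 0 :=
      horth j (mem_range.mp hj)
    rw [this, Matrix.zero_mul]
  rw [Finset.sum_eq_zero hz, zero_add,
    mInt_smul_right μ f (fun z => z ^ (r : ℤ)) (p1 r), hmon, Matrix.mul_one]
  rfl

end MOLPUCAux2

namespace MOLPUCAux2
open MOLPUC Finset

variable {m : ℕ}

lemma isUnit_trunc_zero (G : ℕ → ℕ → Mm m) : IsUnit (trunc G 0) := by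
  have : (trunc G 0) = 1 := Subsingleton.elim _ _
  rw [this]; exact isUnit_one

lemma core (r : ℕ) (G : ℕ → ℕ → Mm m) (hT : IsUnit (trunc G r))
    (q : ℕ → Mm m) (hqr : q r = 1)
    (horth : ∀ k, k < r → ∑ i ∈ range (r + 1), q i * G i k = 0) :
    ∑ i ∈ range (r + 1), q i * G i r
      = G r r - ∑ i : Fin r, ∑ j : Fin r, G r i * invBlk G r i j * G j r := by
  set T := trunc G r with hTdef
  have hdet : IsUnit T.det := (Matrix.isUnit_iff_isUnit_det T).mp hT
  set Q : Matrix (Fin m) (Fin r × Fin m) ℂ :=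
    Matrix.of (fun a p => q p.1 a p.2) with hQdef
  set Rm : Matrix (Fin m) (Fin r × Fin m) ℂ :=
    Matrix.of (fun a p => G r p.1 a p.2) with hRdef
  set Cm : Matrix (Fin r × Fin m) (Fin m) ℂ :=
    Matrix.of (fun p b => G p.1 r p.2 b) with hCdef
  have hsum : ∀ k, ∑ i ∈ range r, q i * G i k
      = ∑ i : Fin r, q (i : ℕ) * G (i : ℕ) k := by
    intro k
    rw [Finset.sum_range fun i => q i * G i k]
  have hQT : Q * T = -Rm := by
    ext a p
    obtain ⟨k, b⟩ := p
    have h0 := horth k.1 k.2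
    rw [Finset.sum_range_succ, hqr, one_mul] at h0
    have h1 : ∑ i ∈ range r, q i * G i k.1 = -(G r k.1) := by
      rw [← neg_eq_of_add_eq_zero_left h0]
    calc (Q * T) a (k, b)
        = ∑ p' : Fin r × Fin m, q p'.1 a p'.2 * G p'.1 k.1 p'.2 b := by
          simp [Matrix.mul_apply, hQdef, hTdef, trunc]
      _ = ∑ i : Fin r, ∑ c : Fin m, q (i:ℕ) a c * G (i:ℕ) k.1 c b := by
          rw [Fintype.sum_prod_type]
      _ = ∑ i : Fin r, (q (i:ℕ) * G (i:ℕ) k.1) a b := by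
          refine Finset.sum_congr rfl fun i _ => ?_
          rw [Matrix.mul_apply]
      _ = (∑ i : Fin r, q (i:ℕ) * G (i:ℕ) k.1) a b := by
          rw [Matrix.sum_apply]
      _ = (-(G r k.1)) a b := by rw [← hsum, h1]
      _ = (-Rm) a (k, b) := by simp [hRdef]
  have hQ : Q = -Rm * T⁻¹ := by
    rw [← hQT, Matrix.mul_nonsing_inv_cancel_right _ _ hdet]
  have hQC : ∀ a b, (Q * Cm) a b = (∑ i ∈ range r, q i * G i r) a b := by
    intro a b
    rw [hsum, Matrix.sum_apply, Matrix.mul_apply, Fintype.sum_prod_type]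
    refine Finset.sum_congr rfl fun i _ => ?_
    rw [Matrix.mul_apply]
    rfl
  have hRC : ∀ a b, (Rm * T⁻¹ * Cm) a b
      = ∑ i : Fin r, ∑ j : Fin r, (G r i * invBlk G r i j * G j r) a b := by
    intro a b
    calc (Rm * T⁻¹ * Cm) a b
        = ∑ p2 : Fin r × Fin m, (Rm * T⁻¹) a p2 * Cm p2 b := Matrix.mul_apply
      _ = ∑ p2 : Fin r × Fin m, ∑ p1 : Fin r × Fin m,
            Rm a p1 * T⁻¹ p1 p2 * Cm p2 b := by
          refine Finset.sum_congr rfl fun p2 _ => ?_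
          rw [Matrix.mul_apply, Finset.sum_mul]
      _ = ∑ p1 : Fin r × Fin m, ∑ p2 : Fin r × Fin m,
            Rm a p1 * T⁻¹ p1 p2 * Cm p2 b := Finset.sum_comm
      _ = ∑ i : Fin r, ∑ c : Fin m, ∑ j : Fin r, ∑ d : Fin m,
            G r i a c * T⁻¹ (i, c) (j, d) * G j r d b := by
          rw [Fintype.sum_prod_type]
          refine Finset.sum_congr rfl fun i _ => Finset.sum_congr rfl fun c _ => ?_
          rw [Fintype.sum_prod_type]
          simp only [hRdef, hCdef, Matrix.of_apply]
      _ = ∑ i : Fin r, ∑ j : Fin r, ∑ c : Fin m, ∑ d : Fin m,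
            G r i a c * T⁻¹ (i, c) (j, d) * G j r d b := by
          exact Finset.sum_congr rfl fun i _ => Finset.sum_comm
      _ = ∑ i : Fin r, ∑ j : Fin r, (G r i * invBlk G r i j * G j r) a b := by
          refine Finset.sum_congr rfl fun i _ => Finset.sum_congr rfl fun j _ => ?_
          rw [Matrix.mul_apply]
          rw [Finset.sum_comm]
          refine Finset.sum_congr rfl fun d _ => ?_
          rw [Matrix.mul_apply, Finset.sum_mul]
          refine Finset.sum_congr rfl fun c _ => ?_
          simp only [invBlk, Matrix.of_apply, hTdef]
  have hmain : ∑ i ∈ range r, q i * G i r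
      = -(∑ i : Fin r, ∑ j : Fin r, G r i * invBlk G r i j * G j r) := by
    ext a b
    have h3 : (Q * Cm) a b = -((Rm * T⁻¹ * Cm) a b) := by
      rw [hQ, Matrix.neg_mul, Matrix.neg_mul, Matrix.neg_apply]
    rw [← hQC a b, h3, hRC]
    simp [Matrix.neg_apply, Matrix.sum_apply]
  rw [Finset.sum_range_succ, hqr, one_mul, hmain]
  abel

end MOLPUCAux2

namespace MOLPUCAux2
open MOLPUC MOLPUCAux Finset

variable {m : ℕ}

lemma keyL_even (μ : MatMeas m) (p : ℕ → Mm m) (l k : ℕ) :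
    ∑ i ∈ range (2 * l + 1), p ((l : ℤ) + nexp i).toNat * gL μ i k
      = mInt μ (pev p (2 * l)) (zmon (-((l : ℤ) + nexp k))) := by
  calc ∑ i ∈ range (2 * l + 1), p ((l : ℤ) + nexp i).toNat * gL μ i k
      = ∑ i ∈ range (2 * l + 1),
          (fun n : ℤ => p n.toNat * (((2 * Real.pi : ℝ) : ℂ)
            • moment μ (-(n + -((l : ℤ) + nexp k))))) ((l : ℤ) + nexp i) := by
        refine Finset.sum_congr rfl fun i _ => ?_
        beta_reduce
        rw [show -(((l : ℤ) + nexp i) + -((l : ℤ) + nexp k)) = nexp k - nexp i by ring]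
        rfl
    _ = ∑ j ∈ range (2 * l + 1),
          (fun n : ℤ => p n.toNat * (((2 * Real.pi : ℝ) : ℂ)
            • moment μ (-(n + -((l : ℤ) + nexp k))))) (j : ℤ) :=
        (sum_reindex_even l (fun n : ℤ => p n.toNat * (((2 * Real.pi : ℝ) : ℂ)
          • moment μ (-(n + -((l : ℤ) + nexp k)))))).symm
    _ = ∑ j ∈ range (2 * l + 1), p j * (((2 * Real.pi : ℝ) : ℂ)
            • moment μ (-((j : ℤ) + -((l : ℤ) + nexp k)))) := by
        refine Finset.sum_congr rfl fun j _ => ?_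
        simp
    _ = mInt μ (pev p (2 * l)) (zmon (-((l : ℤ) + nexp k))) :=
        (expand_left μ p (2 * l) (-((l : ℤ) + nexp k))).symm

lemma keyL_odd (μ : MatMeas m) (p : ℕ → Mm m) (l k : ℕ) :
    ∑ i ∈ range (2 * l + 2), p ((l : ℤ) - nexp i).toNat * gR μ i k
      = mInt μ (pev p (2 * l + 1)) (zmon (-((l : ℤ) - nexp k))) := by
  calc ∑ i ∈ range (2 * l + 2), p ((l : ℤ) - nexp i).toNat * gR μ i k
      = ∑ i ∈ range (2 * l + 2),
          (fun n : ℤ => p n.toNat * (((2 * Real.pi : ℝ) : ℂ)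
            • moment μ (-(n + -((l : ℤ) - nexp k))))) ((l : ℤ) - nexp i) := by
        refine Finset.sum_congr rfl fun i _ => ?_
        beta_reduce
        rw [show -(((l : ℤ) - nexp i) + -((l : ℤ) - nexp k)) = nexp i - nexp k by ring]
        rfl
    _ = ∑ j ∈ range (2 * l + 2),
          (fun n : ℤ => p n.toNat * (((2 * Real.pi : ℝ) : ℂ)
            • moment μ (-(n + -((l : ℤ) - nexp k))))) (j : ℤ) :=
        (sum_reindex_odd l (fun n : ℤ => p n.toNat * (((2 * Real.pi : ℝ) : ℂ)
          • moment μ (-(n + -((l : ℤ) - nexp k)))))).symm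
    _ = ∑ j ∈ range (2 * l + 1 + 1), p j * (((2 * Real.pi : ℝ) : ℂ)
            • moment μ (-((j : ℤ) + -((l : ℤ) - nexp k)))) := by
        rw [show 2 * l + 1 + 1 = 2 * l + 2 from rfl]
        refine Finset.sum_congr rfl fun j _ => ?_
        simp
    _ = mInt μ (pev p (2 * l + 1)) (zmon (-((l : ℤ) - nexp k))) :=
        (expand_left μ p (2 * l + 1) (-((l : ℤ) - nexp k))).symm

lemma keyR_even (μ : MatMeas m) (p : ℕ → Mm m) (l k : ℕ) :
    ∑ i ∈ range (2 * l + 1), (p ((l : ℤ) + nexp i).toNat)ᴴ * gR μ i k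
      = mInt μ (fun z => (pev p (2 * l) z)ᴴ) (zmon ((l : ℤ) + nexp k)) := by
  calc ∑ i ∈ range (2 * l + 1), (p ((l : ℤ) + nexp i).toNat)ᴴ * gR μ i k
      = ∑ i ∈ range (2 * l + 1),
          (fun n : ℤ => (p n.toNat)ᴴ * (((2 * Real.pi : ℝ) : ℂ)
            • moment μ (-(-n + ((l : ℤ) + nexp k))))) ((l : ℤ) + nexp i) := by
        refine Finset.sum_congr rfl fun i _ => ?_
        beta_reduce
        rw [show -(-((l : ℤ) + nexp i) + ((l : ℤ) + nexp k)) = nexp i - nexp k by ring]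
        rfl
    _ = ∑ j ∈ range (2 * l + 1),
          (fun n : ℤ => (p n.toNat)ᴴ * (((2 * Real.pi : ℝ) : ℂ)
            • moment μ (-(-n + ((l : ℤ) + nexp k))))) (j : ℤ) :=
        (sum_reindex_even l (fun n : ℤ => (p n.toNat)ᴴ * (((2 * Real.pi : ℝ) : ℂ)
          • moment μ (-(-n + ((l : ℤ) + nexp k)))))).symm
    _ = ∑ j ∈ range (2 * l + 1), (p j)ᴴ * (((2 * Real.pi : ℝ) : ℂ)
            • moment μ (-(-(j : ℤ) + ((l : ℤ) + nexp k)))) := by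
        refine Finset.sum_congr rfl fun j _ => ?_
        simp
    _ = mInt μ (fun z => (pev p (2 * l) z)ᴴ) (zmon ((l : ℤ) + nexp k)) :=
        (expand_conj μ p (2 * l) ((l : ℤ) + nexp k)).symm

lemma keyR_odd (μ : MatMeas m) (p : ℕ → Mm m) (l k : ℕ) :
    ∑ i ∈ range (2 * l + 2), (p ((l : ℤ) - nexp i).toNat)ᴴ * gL μ i k
      = mInt μ (fun z => (pev p (2 * l + 1) z)ᴴ) (zmon ((l : ℤ) - nexp k)) := by
  calc ∑ i ∈ range (2 * l + 2), (p ((l : ℤ) - nexp i).toNat)ᴴ * gL μ i k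
      = ∑ i ∈ range (2 * l + 2),
          (fun n : ℤ => (p n.toNat)ᴴ * (((2 * Real.pi : ℝ) : ℂ)
            • moment μ (-(-n + ((l : ℤ) - nexp k))))) ((l : ℤ) - nexp i) := by
        refine Finset.sum_congr rfl fun i _ => ?_
        beta_reduce
        rw [show -(-((l : ℤ) - nexp i) + ((l : ℤ) - nexp k)) = nexp k - nexp i by ring]
        rfl
    _ = ∑ j ∈ range (2 * l + 2),
          (fun n : ℤ => (p n.toNat)ᴴ * (((2 * Real.pi : ℝ) : ℂ)
            • moment μ (-(-n + ((l : ℤ) - nexp k))))) (j : ℤ) :=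
        (sum_reindex_odd l (fun n : ℤ => (p n.toNat)ᴴ * (((2 * Real.pi : ℝ) : ℂ)
          • moment μ (-(-n + ((l : ℤ) - nexp k)))))).symm
    _ = ∑ j ∈ range (2 * l + 1 + 1), (p j)ᴴ * (((2 * Real.pi : ℝ) : ℂ)
            • moment μ (-(-(j : ℤ) + ((l : ℤ) - nexp k)))) := by
        rw [show 2 * l + 1 + 1 = 2 * l + 2 from rfl]
        refine Finset.sum_congr rfl fun j _ => ?_
        simp
    _ = mInt μ (fun z => (pev p (2 * l + 1) z)ᴴ) (zmon ((l : ℤ) - nexp k)) :=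
        (expand_conj μ p (2 * l + 1) ((l : ℤ) - nexp k)).symm

end MOLPUCAux2

namespace MOLPUCAux2
open MOLPUC MOLPUCAux Finset

variable {m : ℕ}

lemma caseLE (μ : MatMeas m) (hμ : QuasiDefinite μ) (p1 p2 : ℕ → Mm m) (l : ℕ)
    (hm1 : p1 (2 * l) = 1)
    (h1 : ∀ j : ℕ, j < 2 * l → mInt μ (pev p1 (2 * l)) (zmon (-(j : ℤ))) = 0)
    (hm2 : p2 (2 * l) = 1) :
    mInt μ (pev p1 (2 * l)) (fun z => (pev p2 (2 * l) z)ᴴ) = DL μ (2 * l) := by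
  have hT : IsUnit (trunc (gL μ) (2 * l)) := by
    rcases Nat.eq_zero_or_pos l with h | h
    · subst h; exact isUnit_trunc_zero _
    · exact (hμ (2 * l) (by omega)).1
  set q : ℕ → Mm m := fun i => p1 ((l : ℤ) + nexp i).toNat with hqdef
  have hq : q (2 * l) = 1 := by
    have : ((l : ℤ) + nexp (2 * l)).toNat = 2 * l := by rw [nexp_double]; omega
    rw [hqdef]; beta_reduce; rw [this]; exact hm1
  have horthG : ∀ k, k < 2 * l → ∑ i ∈ range (2 * l + 1), q i * gL μ i k = 0 := by
    intro k hk
    have hb : -(l : ℤ) ≤ nexp k ∧ nexp k < (l : ℤ) := by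
      unfold nexp; split_ifs <;> omega
    rw [keyL_even μ p1 l k]
    have hj : -((l : ℤ) + nexp k) = -((((l : ℤ) + nexp k).toNat : ℕ) : ℤ) := by omega
    rw [hj]
    exact h1 _ (by omega)
  have hfin : mInt μ (pev p1 (2 * l)) (fun z => (pev p2 (2 * l) z)ᴴ)
      = ∑ i ∈ range (2 * l + 1), q i * gL μ i (2 * l) := by
    rw [peel_conj μ _ p2 (2 * l) hm2 h1, keyL_even μ p1 l (2 * l)]
    congr 1
    rw [nexp_double]
    push_cast
    ring
  rw [hfin]
  exact core (2 * l) (gL μ) hT q hq horthG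

lemma caseLO (μ : MatMeas m) (hμ : QuasiDefinite μ) (p1 p2 : ℕ → Mm m) (l : ℕ)
    (hm1 : p1 (2 * l + 1) = 1)
    (h1 : ∀ j : ℕ, j < 2 * l + 1 → mInt μ (pev p1 (2 * l + 1)) (zmon (-(j : ℤ))) = 0)
    (hm2 : p2 (2 * l + 1) = 1) :
    mInt μ (pev p1 (2 * l + 1)) (fun z => (pev p2 (2 * l + 1) z)ᴴ) = DR μ (2 * l + 1) := by
  have hT : IsUnit (trunc (gR μ) (2 * l + 1)) := (hμ (2 * l + 1) (by omega)).2
  set q : ℕ → Mm m := fun i => p1 ((l : ℤ) - nexp i).toNat with hqdef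
  have hq : q (2 * l + 1) = 1 := by
    have : ((l : ℤ) - nexp (2 * l + 1)).toNat = 2 * l + 1 := by rw [nexp_odd']; omega
    rw [hqdef]; beta_reduce; rw [this]; exact hm1
  have horthG : ∀ k, k < 2 * l + 1 → ∑ i ∈ range (2 * l + 1 + 1), q i * gR μ i k = 0 := by
    intro k hk
    have hb : -(l : ℤ) ≤ nexp k ∧ nexp k ≤ (l : ℤ) := by
      unfold nexp; split_ifs <;> omega
    rw [show (2 * l + 1 + 1) = 2 * l + 2 from rfl, keyL_odd μ p1 l k]
    have hj : -((l : ℤ) - nexp k) = -(((((l : ℤ) - nexp k).toNat : ℕ)) : ℤ) := by omega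
    rw [hj]
    exact h1 _ (by omega)
  have hfin : mInt μ (pev p1 (2 * l + 1)) (fun z => (pev p2 (2 * l + 1) z)ᴴ)
      = ∑ i ∈ range (2 * l + 2), q i * gR μ i (2 * l + 1) := by
    rw [peel_conj μ _ p2 (2 * l + 1) hm2 h1, keyL_odd μ p1 l (2 * l + 1)]
    congr 1
    rw [nexp_odd']
    push_cast
    ring
  rw [hfin, show (2 * l + 2) = 2 * l + 1 + 1 from rfl]
  exact core (2 * l + 1) (gR μ) hT q hq horthG

lemma caseRE (μ : MatMeas m) (hμ : QuasiDefinite μ) (p1 p2 : ℕ → Mm m) (l : ℕ)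
    (hm1 : p1 (2 * l) = 1)
    (h2 : ∀ j : ℕ, j < 2 * l →
      mInt μ (fun z => (pev p2 (2 * l) z)ᴴ) (zmon (j : ℤ)) = 0)
    (hm2 : p2 (2 * l) = 1) :
    mInt μ (fun z => (pev p2 (2 * l) z)ᴴ) (pev p1 (2 * l)) = DR μ (2 * l) := by
  have hT : IsUnit (trunc (gR μ) (2 * l)) := by
    rcases Nat.eq_zero_or_pos l with h | h
    · subst h; exact isUnit_trunc_zero _
    · exact (hμ (2 * l) (by omega)).2
  set q : ℕ → Mm m := fun i => (p2 ((l : ℤ) + nexp i).toNat)ᴴ with hqdef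
  have hq : q (2 * l) = 1 := by
    have : ((l : ℤ) + nexp (2 * l)).toNat = 2 * l := by rw [nexp_double]; omega
    rw [hqdef]; beta_reduce; rw [this, hm2, Matrix.conjTranspose_one]
  have horthG : ∀ k, k < 2 * l → ∑ i ∈ range (2 * l + 1), q i * gR μ i k = 0 := by
    intro k hk
    have hb : -(l : ℤ) ≤ nexp k ∧ nexp k < (l : ℤ) := by
      unfold nexp; split_ifs <;> omega
    rw [keyR_even μ p2 l k]
    have hj : ((l : ℤ) + nexp k) = ((((l : ℤ) + nexp k).toNat : ℕ) : ℤ) := by omega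
    rw [hj]
    exact h2 _ (by omega)
  have hfin : mInt μ (fun z => (pev p2 (2 * l) z)ᴴ) (pev p1 (2 * l))
      = ∑ i ∈ range (2 * l + 1), q i * gR μ i (2 * l) := by
    rw [peel_plain μ _ p1 (2 * l) hm1 h2, keyR_even μ p2 l (2 * l)]
    congr 1
    rw [nexp_double]
    push_cast
    ring
  rw [hfin]
  exact core (2 * l) (gR μ) hT q hq horthG

lemma caseRO (μ : MatMeas m) (hμ : QuasiDefinite μ) (p1 p2 : ℕ → Mm m) (l : ℕ)
    (hm1 : p1 (2 * l + 1) = 1)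
    (h2 : ∀ j : ℕ, j < 2 * l + 1 →
      mInt μ (fun z => (pev p2 (2 * l + 1) z)ᴴ) (zmon (j : ℤ)) = 0)
    (hm2 : p2 (2 * l + 1) = 1) :
    mInt μ (fun z => (pev p2 (2 * l + 1) z)ᴴ) (pev p1 (2 * l + 1)) = DL μ (2 * l + 1) := by
  have hT : IsUnit (trunc (gL μ) (2 * l + 1)) := (hμ (2 * l + 1) (by omega)).1
  set q : ℕ → Mm m := fun i => (p2 ((l : ℤ) - nexp i).toNat)ᴴ with hqdef
  have hq : q (2 * l + 1) = 1 := by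
    have : ((l : ℤ) - nexp (2 * l + 1)).toNat = 2 * l + 1 := by rw [nexp_odd']; omega
    rw [hqdef]; beta_reduce; rw [this, hm2, Matrix.conjTranspose_one]
  have horthG : ∀ k, k < 2 * l + 1 → ∑ i ∈ range (2 * l + 1 + 1), q i * gL μ i k = 0 := by
    intro k hk
    have hb : -(l : ℤ) ≤ nexp k ∧ nexp k ≤ (l : ℤ) := by
      unfold nexp; split_ifs <;> omega
    rw [show (2 * l + 1 + 1) = 2 * l + 2 from rfl, keyR_odd μ p2 l k]
    have hj : ((l : ℤ) - nexp k) = (((((l : ℤ) - nexp k).toNat : ℕ)) : ℤ) := by omega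
    rw [hj]
    exact h2 _ (by omega)
  have hfin : mInt μ (fun z => (pev p2 (2 * l + 1) z)ᴴ) (pev p1 (2 * l + 1))
      = ∑ i ∈ range (2 * l + 2), q i * gL μ i (2 * l + 1) := by
    rw [peel_plain μ _ p1 (2 * l + 1) hm1 h2, keyR_odd μ p2 l (2 * l + 1)]
    congr 1
    rw [nexp_odd']
    push_cast
    ring
  rw [hfin, show (2 * l + 2) = 2 * l + 1 + 1 from rfl]
  exact core (2 * l + 1) (gL μ) hT q hq horthG

end MOLPUCAux2

open MOLPUC in
/-- the matrix quasi-norms of the Szegő polynomials coincide with the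
Schur complements of the truncated CMV moment matrices. -/
theorem quasi_norms_are_Schur_complements
    (m : ℕ) (hm : 1 ≤ m) (μ : MatMeas m) (hμ : QuasiDefinite μ)
    (PL1 PL2 PR1 PR2 : ℕ → ℕ → Mm m)
    (hPL1 : IsSzL1 μ PL1) (hPL2 : IsSzL2 μ PL2)
    (hPR1 : IsSzR1 μ PR1) (hPR2 : IsSzR2 μ PR2) :
    ∀ l : ℕ,
      mInt μ (pev (PL1 (2 * l)) (2 * l))
        (fun z => (pev (PL2 (2 * l)) (2 * l) z)ᴴ) = DL μ (2 * l) ∧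
      mInt μ (pev (PL1 (2 * l + 1)) (2 * l + 1))
        (fun z => (pev (PL2 (2 * l + 1)) (2 * l + 1) z)ᴴ) = DR μ (2 * l + 1) ∧
      mInt μ (fun z => (pev (PR2 (2 * l)) (2 * l) z)ᴴ)
        (pev (PR1 (2 * l)) (2 * l)) = DR μ (2 * l) ∧
      mInt μ (fun z => (pev (PR2 (2 * l + 1)) (2 * l + 1) z)ᴴ)
        (pev (PR1 (2 * l + 1)) (2 * l + 1)) = DL μ (2 * l + 1) := by
  intro l
  refine ⟨?_, ?_, ?_, ?_⟩
  · exact MOLPUCAux2.caseLE μ hμ (PL1 (2*l)) (PL2 (2*l)) l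
      ((hPL1 (2*l)).1.1) ((hPL1 (2*l)).2) ((hPL2 (2*l)).1.1)
  · exact MOLPUCAux2.caseLO μ hμ (PL1 (2*l+1)) (PL2 (2*l+1)) l
      ((hPL1 (2*l+1)).1.1) ((hPL1 (2*l+1)).2) ((hPL2 (2*l+1)).1.1)
  · exact MOLPUCAux2.caseRE μ hμ (PR1 (2*l)) (PR2 (2*l)) l
      ((hPR1 (2*l)).1.1) ((hPR2 (2*l)).2) ((hPR2 (2*l)).1.1)
  · exact MOLPUCAux2.caseRO μ hμ (PR1 (2*l+1)) (PR2 (2*l+1)) l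
      ((hPR1 (2*l+1)).1.1) ((hPR2 (2*l+1)).2) ((hPR2 (2*l+1)).1.1)
end
end

section
/- Assume μ is quasi-definite. Then for every l ≥ 0 the matrix quasi-norms are given by the integral formulas: h^R_{2l+1} = ∮_𝕋 φ₁^{L,(2l+1)}(z) dμ(z)/(iz) · z^{l+1}; h^L_{2l} = ∮_𝕋 φ₁^{L,(2l)}(z) dμ(z)/(iz) · z^{-l}; h^R_{2l} = ∮_𝕋 ψ^{R,(2l)}(z) dμ(z)/(iz) · z^{l}; and h^L_{2l+1} = ∮_𝕋 ψ^{R,(2l+1)}(z) dμ(z)/(iz) · z^{-l-1}. -/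
noncomputable section

open scoped Matrix
open Finset

/-!
`φ₁^{L,(l)}` is `z^{n_l}` minus a matrix combination of the monomials `z^{n_j}`, `j < l`, and
pairing `z^{n_j}` with `z^{-n_l}` against `dμ/(iz)` yields exactly the moment block `(g^L)_{j,l}`.
By linearity of the integral the pairing is therefore
`(g^L)_{l,l} - R^L_l ((g^L)^{[l]})⁻¹ C^L_l = D^L_l`; likewise `ψ^{R,(l)}` paired with `z^{n_l}`
gives `D^R_l`. Since `n_{2l} = l` and `n_{2l+1} = -l-1`, these are the four formulas.
-/

namespace MOLPUC

variable {m : ℕ}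

def mIntLeft (μ : MatMeas m) (g : ℂ → Mm m) : (ℂ → Mm m) →ₗ[ℂ] Mm m where
  toFun f := mInt μ f g
  map_add' f₁ f₂ := by
    ext a b
    simp only [mInt, Matrix.of_apply, Matrix.add_apply, Pi.add_apply, add_mul, add_div,
      ← Finset.sum_add_distrib]
    exact Finset.sum_congr rfl fun c _ => Finset.sum_congr rfl fun d _ => map_add (μ c d) _ _
  map_smul' r f := by
    ext a b
    simp only [mInt, Matrix.of_apply, Matrix.smul_apply, Pi.smul_apply, smul_eq_mul,
      RingHom.id_apply, Finset.mul_sum, mul_assoc, mul_div_assoc]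
    exact Finset.sum_congr rfl fun c _ => Finset.sum_congr rfl fun d _ => map_smul (μ c d) r _

def zpowMoment (μ : MatMeas m) (k : ℤ) : Mm m :=
  Matrix.of fun a b => μ a b (fun z => (z : ℂ) ^ k / (Complex.I * (z : ℂ)))

theorem mInt_zpow_smul_zmon (μ : MatMeas m) (k n : ℤ) (A : Mm m) :
    mInt μ (fun z => z ^ k • A) (zmon n) = A * zpowMoment μ (k + n) := by
  ext a b
  simp only [mInt, Matrix.of_apply, zpowMoment, Matrix.mul_apply]
  refine Finset.sum_congr rfl fun c _ => ?_
  rw [Fintype.sum_eq_single b fun d hd => by simp [zmon, hd]; exact map_zero _]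
  rw [← smul_eq_mul, ← map_smul]
  congr 1
  funext z
  simp only [zmon, Matrix.smul_apply, smul_eq_mul, Matrix.one_apply_eq, Pi.smul_apply,
    zpow_add₀ (Circle.coe_ne_zero z)]
  ring

theorem mInt_zmon_one (μ : MatMeas m) (k : ℤ) :
    mInt μ (zmon k) (fun _ => 1) = zpowMoment μ k := by
  have hone : (fun _ : ℂ => (1 : Mm m)) = zmon 0 := by funext z; simp [zmon]
  have h := mInt_zpow_smul_zmon μ k 0 1
  rwa [add_zero, one_mul, ← hone] at h

theorem gL_eq_zpowMoment (μ : MatMeas m) (i j : ℕ) :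
    gL μ i j = zpowMoment μ (nexp i - nexp j) := by
  rw [gL, moment, smul_smul, mul_inv_cancel₀ (by simp [Real.pi_ne_zero]), one_smul, neg_sub,
    mInt_zmon_one]

theorem gR_eq_zpowMoment (μ : MatMeas m) (i j : ℕ) :
    gR μ i j = zpowMoment μ (nexp j - nexp i) := by
  rw [gR, moment, smul_smul, mul_inv_cancel₀ (by simp [Real.pi_ne_zero]), one_smul, neg_sub,
    mInt_zmon_one]

theorem mInt_phiL_zmon (μ : MatMeas m) (l : ℕ) :
    mInt μ (phiL μ l) (zmon (-nexp l)) = DL μ l := by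
  have hphi : phiL μ l = (fun z => z ^ nexp l • 1) -
      ∑ i : Fin l, ∑ j : Fin l, fun z => z ^ nexp j • (gL μ l i * invBlk (gL μ) l i j) := by
    funext z; simp [phiL, chi]
  change mIntLeft μ _ _ = _
  simp only [hphi, map_sub, map_sum]
  simp only [mIntLeft, LinearMap.coe_mk, AddHom.coe_mk, mInt_zpow_smul_zmon, one_mul, DL,
    gL_eq_zpowMoment, mul_assoc, add_neg_cancel, sub_self, ← sub_eq_add_neg]

theorem mInt_psiR_zmon (μ : MatMeas m) (l : ℕ) :
    mInt μ (psiR μ l) (zmon (nexp l)) = DR μ l := by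
  have hpsi : psiR μ l = (fun z => z ^ (-nexp l) • 1) -
      ∑ i : Fin l, ∑ j : Fin l, fun z => z ^ (-nexp j) • (gR μ l i * invBlk (gR μ) l i j) := by
    funext z; simp [psiR, chi, zpow_neg]
  change mIntLeft μ _ _ = _
  simp only [hpsi, map_sub, map_sum]
  simp only [mIntLeft, LinearMap.coe_mk, AddHom.coe_mk, mInt_zpow_smul_zmon, one_mul, DR,
    gR_eq_zpowMoment, mul_assoc, neg_add_cancel, sub_self, neg_add_eq_sub]

theorem nexp_two_mul (l : ℕ) : nexp (2 * l) = l := by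
  rw [nexp, if_neg (by omega), Nat.mul_div_cancel_left l two_pos]

theorem nexp_two_mul_add_one (l : ℕ) : nexp (2 * l + 1) = -((l : ℤ) + 1) := by
  rw [nexp, if_pos (by omega), show (2 * l + 1 + 1) / 2 = l + 1 by omega]
  push_cast; rfl

end MOLPUC

open MOLPUC in
theorem quasi_norms_integral_formulas_general
    (m : ℕ) (μ : MatMeas m) :
    ∀ l : ℕ,
      hRn μ (2 * l + 1) = mInt μ (phiL μ (2 * l + 1)) (zmon ((l : ℤ) + 1)) ∧
      hLn μ (2 * l) = mInt μ (phiL μ (2 * l)) (zmon (-(l : ℤ))) ∧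
      hRn μ (2 * l) = mInt μ (psiR μ (2 * l)) (zmon (l : ℤ)) ∧
      hLn μ (2 * l + 1) = mInt μ (psiR μ (2 * l + 1)) (zmon (-(l : ℤ) - 1)) := by
  intro l
  have hodd : ¬(2 * l + 1) % 2 = 0 := by omega
  have heven : (2 * l) % 2 = 0 := by omega
  refine ⟨?_, ?_, ?_, ?_⟩
  · rw [hRn, if_neg hodd, ← mInt_phiL_zmon, nexp_two_mul_add_one, neg_neg]
  · rw [hLn, if_pos heven, ← mInt_phiL_zmon, nexp_two_mul]
  · rw [hRn, if_pos heven, ← mInt_psiR_zmon, nexp_two_mul]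
  · rw [hLn, if_neg hodd, ← mInt_psiR_zmon, nexp_two_mul_add_one, neg_add']

open MOLPUC in
/-- integral formulas for the matrix quasi-norms. -/
theorem quasi_norms_integral_formulas
    (m : ℕ) (hm : 1 ≤ m) (μ : MatMeas m) (hμ : QuasiDefinite μ) :
    ∀ l : ℕ,
      hRn μ (2 * l + 1) = mInt μ (phiL μ (2 * l + 1)) (zmon ((l : ℤ) + 1)) ∧
      hLn μ (2 * l) = mInt μ (phiL μ (2 * l)) (zmon (-(l : ℤ))) ∧
      hRn μ (2 * l) = mInt μ (psiR μ (2 * l)) (zmon (l : ℤ)) ∧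
      hLn μ (2 * l + 1) = mInt μ (psiR μ (2 * l + 1)) (zmon (-(l : ℤ) - 1)) :=
  quasi_norms_integral_formulas_general m μ
end
end

section
/- Assume μ is quasi-definite. Then for every n ≥ 0: h^R_n (α^L_{2,n})† = (α^R_{2,n})† h^L_n; h^L_n α^R_{1,n+1} = α^L_{1,n+1} h^R_n; α^L_{1,n} h^R_n = h^L_n α^R_{1,n}; and (α^R_{2,n+1})† h^L_n = h^R_n (α^L_{2,n+1})†. Moreover for every k ≥ 1: h^L_k = (I − α^L_{1,k} (α^R_{2,k})†) h^L_{k−1}; h^R_k = (I − (α^R_{2,k})† α^L_{1,k}) h^R_{k−1}; h^L_k = h^L_{k−1} (I − α^R_{1,k} (α^L_{2,k})†); and h^R_k = h^R_{k−1} (I − (α^L_{2,k})† α^R_{1,k}). -/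
noncomputable section

open scoped Matrix
open Finset

/-!
Write `S n = ∮ z^n dμ(z)/(iz)` and `T_l = (S (i - j))_{i,j<l}` for the block Toeplitz matrix.
Since `i ↦ n_i + ⌊l/2⌋` permutes `{0, …, l-1}`, both truncated CMV moment matrices are
simultaneous permutations of `T_l` (for `g^R` composed with the reversal `i ↦ l-1-i`), and both
families of Schur complements are inverses of corner blocks of `W = T_{l+1}⁻¹`:
`h^L_l = (W_{ll})⁻¹` and `h^R_l = (W_{00})⁻¹`. The orthogonality conditions make the coefficient
vectors of the Szegő polynomials multiples of a boundary row or column of `W`, so the Verblunsky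
matrices are `h^L W_{l0}`, `W_{0l} h^L`, `W_{l0} h^R` and `h^R W_{0l}`.

Finally `T_{l+1}` is `T_{l+2}` with its first or its last index deleted. If `a, b, c, d` are
the blocks `(0,0), (0,l+1), (l+1,0), (l+1,l+1)` of `T_{l+2}⁻¹`, this gives
`(T_{l+1}⁻¹)_{00} = a - b d⁻¹ c` and `(T_{l+1}⁻¹)_{ll} = d - c a⁻¹ b`, and every relation becomes
a ring identity between `a, b, c, d` and the inverses of these two Schur complements.
-/

namespace Matrix

section SchurComplement

variable {R : Type*} [Ring R] {n : ℕ} {M W : Matrix (Fin (n + 1)) (Fin (n + 1)) R}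
  {V : Matrix (Fin n) (Fin n) R} (p : Fin (n + 1))

theorem sum_succAbove_mul_apply (i q : Fin (n + 1)) :
    ∑ k, M i (p.succAbove k) * W (p.succAbove k) q = (M * W) i q - M i p * W p q := by
  rw [mul_apply, Fin.sum_univ_succAbove _ p]
  abel

theorem schur_mul_inv_apply_self (hMW : M * W = 1)
    (hVM : V * M.submatrix p.succAbove p.succAbove = 1) :
    (M p p - ∑ i, ∑ j, M p (p.succAbove i) * V i j * M (p.succAbove j) p) * W p p = 1 := by
  have hcol (i : Fin n) :
      W (p.succAbove i) p = -∑ j, V i j * (M (p.succAbove j) p * W p p) := by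
    calc W (p.succAbove i) p
        = ∑ j, V i j * ∑ k, M (p.succAbove j) (p.succAbove k) * W (p.succAbove k) p := by
          simp only [Finset.mul_sum, ← mul_assoc]
          rw [Finset.sum_comm]
          simp only [← Finset.sum_mul, ← submatrix_apply (A := M), ← mul_apply, hVM,
            one_apply, ite_mul, one_mul, zero_mul, Finset.sum_ite_eq, Finset.mem_univ,
            if_true]
      _ = _ := by
          simp only [sum_succAbove_mul_apply, hMW,
            one_apply_ne (p.succAbove_ne _), zero_sub, mul_neg, Finset.sum_neg_distrib]
  have hrow := congr_fun (congr_fun hMW p) p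
  rw [mul_apply, Fin.sum_univ_succAbove _ p, one_apply_eq] at hrow
  simp only [hcol, mul_neg, Finset.mul_sum, Finset.sum_neg_distrib] at hrow
  rw [← hrow, sub_mul, Finset.sum_mul, sub_eq_add_neg]
  simp only [Finset.sum_mul, mul_assoc]

theorem inv_apply_self_mul_schur (hWM : W * M = 1)
    (hMV : M.submatrix p.succAbove p.succAbove * V = 1) :
    W p p * (M p p - ∑ i, ∑ j, M p (p.succAbove i) * V i j * M (p.succAbove j) p) = 1 := by
  have hrow (j : Fin n) :
      W p (p.succAbove j) = -∑ i, W p p * M p (p.succAbove i) * V i j := by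
    calc W p (p.succAbove j)
        = ∑ i, (∑ k, W p (p.succAbove k) * M (p.succAbove k) (p.succAbove i)) * V i j := by
          simp only [Finset.sum_mul, mul_assoc]
          rw [Finset.sum_comm]
          simp only [← Finset.mul_sum, ← submatrix_apply (A := M), ← mul_apply, hMV,
            one_apply, mul_ite, mul_one, mul_zero, Finset.sum_ite_eq', Finset.mem_univ,
            if_true]
      _ = _ := by
          simp only [sum_succAbove_mul_apply, hWM,
            one_apply_ne (p.succAbove_ne _).symm, zero_sub, neg_mul, Finset.sum_neg_distrib]
  have hcol := congr_fun (congr_fun hWM p) p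
  rw [mul_apply, Fin.sum_univ_succAbove _ p, one_apply_eq] at hcol
  simp only [hrow, neg_mul, Finset.sum_mul, Finset.sum_neg_distrib] at hcol
  rw [← hcol, mul_sub, Finset.mul_sum, sub_eq_add_neg]
  rw [Finset.sum_comm]
  simp only [Finset.mul_sum, mul_assoc]

theorem inv_submatrix_succAbove_apply (hMW : M * W = 1)
    (hVM : V * M.submatrix p.succAbove p.succAbove = 1) {s : R} (hs : W p p * s = 1)
    (i j : Fin n) :
    V i j =
      W (p.succAbove i) (p.succAbove j) - W (p.succAbove i) p * s * W p (p.succAbove j) := by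
  set X : Matrix (Fin n) (Fin n) R := of fun i j =>
    W (p.succAbove i) (p.succAbove j) - W (p.succAbove i) p * s * W p (p.succAbove j)
  have hMX : M.submatrix p.succAbove p.succAbove * X = 1 := by
    ext i j
    simp only [X, mul_apply, submatrix_apply, of_apply, mul_sub,
      Finset.sum_sub_distrib, ← mul_assoc, ← Finset.sum_mul]
    rw [sum_succAbove_mul_apply, sum_succAbove_mul_apply, hMW,
      one_apply_ne (p.succAbove_ne _), one_apply, one_apply]
    simp only [Fin.succAbove_right_inj, zero_sub, neg_mul, sub_neg_eq_add, mul_assoc, hs, one_mul]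
    abel
  calc V i j = (V * (M.submatrix p.succAbove p.succAbove * X)) i j := by rw [hMX, mul_one]
    _ = X i j := by rw [← mul_assoc, hVM, one_mul]

end SchurComplement

section LinearSystems

variable {R ι : Type*} [Ring R] [Fintype ι] [DecidableEq ι] {M W : Matrix ι ι R} {c : ι} {t : R}

theorem eq_mul_inv_apply_of_vecMul_apply_eq_zero (hMW : M * W = 1) {x : ι → R}
    (hx : ∀ j, j ≠ c → (x ᵥ* M) j = 0) (hxc : x c = 1) (ht : W c c * t = 1) (k : ι) :
    x k = t * W c k := by
  have hxM : x ᵥ* M = Pi.single c ((x ᵥ* M) c) := by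
    ext j
    by_cases hj : j = c
    · subst hj; simp
    · simp [hj, hx j hj]
  have hxk (k : ι) : x k = (x ᵥ* M) c * W c k := by
    conv_lhs => rw [← vecMul_one x, ← hMW, ← vecMul_vecMul, hxM, single_vecMul]
    rfl
  have hh : (x ᵥ* M) c * W c c = 1 := (hxk c).symm.trans hxc
  rw [hxk k, left_inv_eq_right_inv hh ht]

theorem eq_inv_apply_mul_of_mulVec_apply_eq_zero (hWM : W * M = 1) {y : ι → R}
    (hy : ∀ j, j ≠ c → (M *ᵥ y) j = 0) (hyc : y c = 1) (ht : t * W c c = 1) (k : ι) :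
    y k = W k c * t := by
  have hMy : M *ᵥ y = Pi.single c ((M *ᵥ y) c) := by
    ext j
    by_cases hj : j = c
    · subst hj; simp
    · simp [hj, hy j hj]
  have hyk (k : ι) : y k = W k c * (M *ᵥ y) c := by
    conv_lhs => rw [← one_mulVec y, ← hWM, ← mulVec_mulVec, hMy, mulVec_single]
    rfl
  have hh : W c c * (M *ᵥ y) c = 1 := (hyk c).symm.trans hyc
  rw [hyk k, left_inv_eq_right_inv ht hh]

end LinearSystems

section Toeplitz

variable {R : Type*} (S : ℤ → R) (n : ℕ)

def toeplitz : Matrix (Fin n) (Fin n) R :=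
  of fun i j => S (i - j)

theorem toeplitz_submatrix_castSucc :
    (toeplitz S (n + 1)).submatrix Fin.castSucc Fin.castSucc = toeplitz S n := by
  ext i j
  simp [toeplitz]

theorem toeplitz_submatrix_succ :
    (toeplitz S (n + 1)).submatrix Fin.succ Fin.succ = toeplitz S n := by
  ext i j
  simp [toeplitz]

theorem toeplitz_submatrix_rev :
    (toeplitz S n).submatrix Fin.rev Fin.rev = of fun i j : Fin n => S (j - i) := by
  ext i j
  simp only [toeplitz, submatrix_apply, of_apply, Fin.val_rev]
  congr 1
  omega

end Toeplitz

end Matrix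

section SchurIdentities

variable {R : Type*} [Ring R] {a b c d l r x y : R}

theorem eq_one_sub_mul_mul_of_mul_eq_one (hxd : x * d = 1) (hl : (d - c * y * b) * l = 1) :
    x = (1 - x * c * (y * b)) * l := by
  have h : 1 - x * c * (y * b) = x * (d - c * y * b) := by
    rw [mul_sub, hxd]
    noncomm_ring
  rw [h, mul_assoc, hl, mul_one]

theorem eq_mul_one_sub_mul_of_mul_eq_one (hdx : d * x = 1) (hl : l * (d - c * y * b) = 1) :
    x = l * (1 - c * y * (b * x)) := by
  have h : 1 - c * y * (b * x) = (d - c * y * b) * x := by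
    rw [sub_mul, hdx]
    noncomm_ring
  rw [h, ← mul_assoc, hl, one_mul]

theorem mul_mul_eq_mul_mul_of_schur (hdx : d * x = 1) (hya : y * a = 1)
    (hr : (a - b * x * c) * r = 1) (hl : l * (d - c * y * b) = 1) :
    l * (c * y) = x * c * r := by
  have key : c * y * (a - b * x * c) = (d - c * y * b) * (x * c) := by
    rw [mul_sub, sub_mul, mul_assoc c y a, hya, mul_one, ← mul_assoc d, hdx, one_mul]
    noncomm_ring
  calc l * (c * y) = l * (c * y * ((a - b * x * c) * r)) := by rw [hr, mul_one]
    _ = l * ((d - c * y * b) * (x * c)) * r := by rw [← mul_assoc (c * y), key, ← mul_assoc]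
    _ = x * c * r := by rw [← mul_assoc, hl, one_mul]

end SchurIdentities

namespace MOLPUC

open Finset

variable {m : ℕ} (μ : MatMeas m)

def rawMoment (n : ℤ) : Mm m :=
  Matrix.of fun a b => μ a b fun z => (z : ℂ) ^ n / (Complex.I * z)

theorem map_sum_fn {X β : Type*} (φ : (X → ℂ) →ₗ[ℂ] ℂ) (s : Finset β) (F : β → X → ℂ) :
    φ (fun z => ∑ k ∈ s, F k z) = ∑ k ∈ s, φ (F k) := by
  rw [← Finset.sum_fn, map_sum]

theorem mInt_congr {f f' g g' : ℂ → Mm m} (hf : ∀ z : Circle, f z = f' z)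
    (hg : ∀ z : Circle, g z = g' z) : mInt μ f g = mInt μ f' g' := by
  simp only [mInt, hf, hg]

theorem mInt_sum_left {β : Type*} (s : Finset β) (F : β → ℂ → Mm m) (g : ℂ → Mm m) :
    mInt μ (fun z : ℂ => ∑ k ∈ s, F k z) g = ∑ k ∈ s, mInt μ (F k) g := by
  ext a b
  simp only [mInt, Matrix.of_apply, Matrix.sum_apply, sum_mul, sum_div, map_sum_fn]
  symm
  rw [Finset.sum_comm]
  exact Finset.sum_congr rfl fun _ _ => Finset.sum_comm

theorem mInt_sum_right {β : Type*} (s : Finset β) (f : ℂ → Mm m) (G : β → ℂ → Mm m) :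
    mInt μ f (fun z : ℂ => ∑ k ∈ s, G k z) = ∑ k ∈ s, mInt μ f (G k) := by
  ext a b
  simp only [mInt, Matrix.of_apply, Matrix.sum_apply, mul_sum, sum_div, map_sum_fn]
  symm
  rw [Finset.sum_comm]
  exact Finset.sum_congr rfl fun _ _ => Finset.sum_comm

theorem mInt_zpow_smul (s t : ℤ) (A B : Mm m) :
    mInt μ (fun z => z ^ s • A) (fun z => z ^ t • B) = A * rawMoment μ (s + t) * B := by
  ext a b
  have h (c d : Fin m) : μ c d (fun z : Circle => ((z : ℂ) ^ s • A) a c * ((z : ℂ) ^ t • B) d b /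
      (Complex.I * z)) = A a c * B d b * rawMoment μ (s + t) c d := by
    rw [rawMoment, Matrix.of_apply, ← smul_eq_mul, ← map_smul]
    congr 1
    funext z
    simp only [Pi.smul_apply, Matrix.smul_apply, smul_eq_mul, zpow_add₀ z.coe_ne_zero]
    ring
  simp only [mInt, Matrix.of_apply, h, Matrix.mul_apply, Finset.sum_mul]
  rw [Finset.sum_comm]
  exact Finset.sum_congr rfl fun c _ => Finset.sum_congr rfl fun d _ => by ring

theorem pev_eq_sum_zpow (p : ℕ → Mm m) (l : ℕ) :
    pev p l = fun z => ∑ k ∈ range (l + 1), z ^ (k : ℤ) • p k := by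
  simp only [zpow_natCast]
  rfl

theorem conjTranspose_pev (p : ℕ → Mm m) (l : ℕ) (z : Circle) :
    (pev p l z)ᴴ = ∑ k ∈ range (l + 1), (z : ℂ) ^ (-(k : ℤ)) • (p k)ᴴ := by
  simp only [pev, Matrix.conjTranspose_sum, Matrix.conjTranspose_smul, star_pow, zpow_neg,
    zpow_natCast, ← inv_pow, ← Circle.coe_inv, Circle.coe_inv_eq_conj]
  rfl

theorem zmon_eq (t : ℤ) : zmon t = fun z => z ^ t • (1 : Mm m) := rfl

theorem mInt_pev_zmon (p : ℕ → Mm m) (l : ℕ) (t : ℤ) :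
    mInt μ (pev p l) (zmon t) = ∑ k ∈ range (l + 1), p k * rawMoment μ (k + t) := by
  simp only [pev_eq_sum_zpow, zmon_eq, mInt_sum_left, mInt_zpow_smul, mul_one]

theorem mInt_zmon_pev (p : ℕ → Mm m) (l : ℕ) (t : ℤ) :
    mInt μ (zmon t) (pev p l) = ∑ k ∈ range (l + 1), rawMoment μ (t + k) * p k := by
  simp only [pev_eq_sum_zpow, zmon_eq, mInt_sum_right, mInt_zpow_smul, one_mul]

theorem mInt_zmon_conjTranspose_pev (p : ℕ → Mm m) (l : ℕ) (t : ℤ) :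
    mInt μ (zmon t) (fun z => (pev p l z)ᴴ) =
      ∑ k ∈ range (l + 1), rawMoment μ (t - k) * (p k)ᴴ := by
  rw [mInt_congr μ (g' := fun z => ∑ k ∈ range (l + 1), z ^ (-(k : ℤ)) • (p k)ᴴ) (fun _ => rfl)
    (conjTranspose_pev p l)]
  simp only [zmon_eq, mInt_sum_right, mInt_zpow_smul, one_mul, sub_eq_add_neg]

theorem mInt_conjTranspose_pev_zmon (p : ℕ → Mm m) (l : ℕ) (t : ℤ) :
    mInt μ (fun z => (pev p l z)ᴴ) (zmon t) =
      ∑ k ∈ range (l + 1), (p k)ᴴ * rawMoment μ (t - k) := by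
  rw [mInt_congr μ (f' := fun z => ∑ k ∈ range (l + 1), z ^ (-(k : ℤ)) • (p k)ᴴ)
    (conjTranspose_pev p l) (fun _ => rfl)]
  simp only [zmon_eq, mInt_sum_left, mInt_zpow_smul, mul_one, neg_add_eq_sub]

theorem gL_eq (i j : ℕ) : gL μ i j = rawMoment μ (nexp i - nexp j) := by
  have h : mInt μ (zmon (-(nexp j - nexp i))) (fun _ => 1) = rawMoment μ (nexp i - nexp j) := by
    rw [zmon_eq, show (fun _ : ℂ => (1 : Mm m)) = fun z => z ^ (0 : ℤ) • (1 : Mm m) by simp,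
      mInt_zpow_smul]
    simp
  rw [gL, moment, h, smul_smul, mul_inv_cancel₀ (by simp [Real.pi_ne_zero]), one_smul]

theorem gR_eq (i j : ℕ) : gR μ i j = rawMoment μ (nexp j - nexp i) := by
  rw [gR, ← gL, gL_eq]

open Matrix

theorem nexp_injective : Function.Injective nexp := by
  intro i j h
  simp only [nexp] at h
  split_ifs at h <;> omega

theorem nexp_add_half_mem (l : ℕ) (i : Fin l) :
    0 ≤ nexp i + (l / 2 : ℕ) ∧ nexp i + (l / 2 : ℕ) < l := by
  have := i.isLt
  simp only [nexp]
  split_ifs <;> omega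

def cmvPerm (l : ℕ) : Equiv.Perm (Fin l) :=
  Equiv.ofBijective
    (fun i => ⟨(nexp i + (l / 2 : ℕ)).toNat, by have := nexp_add_half_mem l i; omega⟩)
    (Finite.injective_iff_bijective.mp fun i j h => by
      have hi := nexp_add_half_mem l i
      have hj := nexp_add_half_mem l j
      have h' := congrArg Fin.val h
      simp only at h'
      exact Fin.ext (nexp_injective (by omega)))

theorem cmvPerm_coe {l : ℕ} (i : Fin l) : ((cmvPerm l i : ℕ) : ℤ) = nexp i + (l / 2 : ℕ) := by
  have := nexp_add_half_mem l i
  simp only [cmvPerm, Equiv.ofBijective_apply]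
  omega

theorem cmvPerm_last_of_even {n : ℕ} (h : n % 2 = 0) :
    cmvPerm (n + 1) (Fin.last n) = Fin.last n := by
  have := cmvPerm_coe (Fin.last n)
  simp only [Fin.val_last, nexp, if_neg (show ¬ n % 2 = 1 by omega)] at this
  ext
  simp only [Fin.val_last]
  omega

theorem cmvPerm_last_of_odd {n : ℕ} (h : n % 2 = 1) : cmvPerm (n + 1) (Fin.last n) = 0 := by
  have := cmvPerm_coe (Fin.last n)
  simp only [Fin.val_last, nexp, if_pos h] at this
  ext
  simp only [Fin.val_zero]
  omega

def blockTrunc (g : ℕ → ℕ → Mm m) (l : ℕ) : Matrix (Fin l) (Fin l) (Mm m) :=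
  of fun i j => g i j

theorem blockTrunc_gL (l : ℕ) :
    blockTrunc (gL μ) l = (toeplitz (rawMoment μ) l).submatrix (cmvPerm l) (cmvPerm l) := by
  ext1 i j
  simp only [blockTrunc, toeplitz, of_apply, submatrix_apply, gL_eq, cmvPerm_coe]
  congr 1
  ring

theorem blockTrunc_gR (l : ℕ) :
    blockTrunc (gR μ) l = (toeplitz (rawMoment μ) l).submatrix
      ((cmvPerm l).trans Fin.revPerm) ((cmvPerm l).trans Fin.revPerm) := by
  ext1 i j
  have hi := (cmvPerm l i).isLt
  have hj := (cmvPerm l j).isLt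
  have ci := cmvPerm_coe i
  have cj := cmvPerm_coe j
  simp only [blockTrunc, toeplitz, of_apply, submatrix_apply, gR_eq, Equiv.trans_apply,
    Fin.revPerm_apply, Fin.val_rev]
  congr 1
  omega

theorem comp_blockTrunc (g : ℕ → ℕ → Mm m) (l : ℕ) :
    comp _ _ _ _ ℂ (blockTrunc g l) = trunc g l := rfl

theorem comp_invBlk (g : ℕ → ℕ → Mm m) (l : ℕ) :
    comp _ _ _ _ ℂ (of (invBlk g l)) = (trunc g l)⁻¹ := rfl

theorem blockTrunc_mul_invBlk {g : ℕ → ℕ → Mm m} {l : ℕ} (hg : IsUnit (trunc g l)) :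
    blockTrunc g l * of (invBlk g l) = 1 := by
  apply (compRingEquiv (Fin l) (Fin m) ℂ).injective
  rw [map_mul, map_one, compRingEquiv_apply, compRingEquiv_apply, comp_blockTrunc,
    comp_invBlk, mul_nonsing_inv _ ((isUnit_iff_isUnit_det _).mp hg)]

theorem invBlk_mul_blockTrunc {g : ℕ → ℕ → Mm m} {l : ℕ} (hg : IsUnit (trunc g l)) :
    of (invBlk g l) * blockTrunc g l = 1 := by
  apply (compRingEquiv (Fin l) (Fin m) ℂ).injective
  rw [map_mul, map_one, compRingEquiv_apply, compRingEquiv_apply, comp_blockTrunc,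
    comp_invBlk, nonsing_inv_mul _ ((isUnit_iff_isUnit_det _).mp hg)]

def schurLast (g : ℕ → ℕ → Mm m) (l : ℕ) : Mm m :=
  g l l - ∑ i : Fin l, ∑ j : Fin l, g l i * invBlk g l i j * g j l

theorem schurLast_mul_inv_apply {g : ℕ → ℕ → Mm m} {l : ℕ} (hg : IsUnit (trunc g l))
    {T W : Matrix (Fin (l + 1)) (Fin (l + 1)) (Mm m)} (hTW : T * W = 1) (hWT : W * T = 1)
    (π : Equiv.Perm (Fin (l + 1))) (hπ : blockTrunc g (l + 1) = T.submatrix π π) :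
    schurLast g l * W (π (Fin.last l)) (π (Fin.last l)) = 1 ∧
      W (π (Fin.last l)) (π (Fin.last l)) * schurLast g l = 1 := by
  have hGX : blockTrunc g (l + 1) * W.submatrix π π = 1 := by
    rw [hπ, submatrix_mul_equiv, hTW, submatrix_one_equiv]
  have hXG : W.submatrix π π * blockTrunc g (l + 1) = 1 := by
    rw [hπ, submatrix_mul_equiv, hWT, submatrix_one_equiv]
  have hminor : (blockTrunc g (l + 1)).submatrix (Fin.last l).succAbove (Fin.last l).succAbove =
      blockTrunc g l := by
    rw [Fin.succAbove_last]
    rfl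
  have hschur : schurLast g l = blockTrunc g (l + 1) (Fin.last l) (Fin.last l) -
      ∑ i, ∑ j, blockTrunc g (l + 1) (Fin.last l) ((Fin.last l).succAbove i) *
        of (invBlk g l) i j * blockTrunc g (l + 1) ((Fin.last l).succAbove j) (Fin.last l) := by
    simp only [Fin.succAbove_last]
    rfl
  rw [hschur]
  exact ⟨schur_mul_inv_apply_self _ hGX (hminor ▸ invBlk_mul_blockTrunc hg),
    inv_apply_self_mul_schur _ hXG (hminor ▸ blockTrunc_mul_invBlk hg)⟩

variable {μ}

theorem QuasiDefinite.isUnit_trunc (hμ : QuasiDefinite μ) (l : ℕ) :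
    IsUnit (trunc (gL μ) l) ∧ IsUnit (trunc (gR μ) l) := by
  rcases Nat.eq_zero_or_pos l with rfl | hl
  · exact ⟨isUnit_of_subsingleton _, isUnit_of_subsingleton _⟩
  · exact hμ l hl

theorem QuasiDefinite.isUnit_toeplitz (hμ : QuasiDefinite μ) (l : ℕ) :
    IsUnit (toeplitz (rawMoment μ) l) := by
  have h := (hμ.isUnit_trunc l).1
  rw [← comp_blockTrunc, isUnit_comp_iff, blockTrunc_gL] at h
  exact (isUnit_map_iff (reindexRingEquiv (Mm m) (cmvPerm l).symm) _).mp h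

variable (μ) in
def toeplitzInv (n : ℕ) : Matrix (Fin (n + 1)) (Fin (n + 1)) (Mm m) :=
  Ring.inverse (toeplitz (rawMoment μ) (n + 1))

theorem QuasiDefinite.toeplitz_mul_toeplitzInv (hμ : QuasiDefinite μ) (n : ℕ) :
    toeplitz (rawMoment μ) (n + 1) * toeplitzInv μ n = 1 :=
  Ring.mul_inverse_cancel _ (hμ.isUnit_toeplitz _)

theorem QuasiDefinite.toeplitzInv_mul_toeplitz (hμ : QuasiDefinite μ) (n : ℕ) :
    toeplitzInv μ n * toeplitz (rawMoment μ) (n + 1) = 1 :=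
  Ring.inverse_mul_cancel _ (hμ.isUnit_toeplitz _)

theorem QuasiDefinite.hLn_mul_toeplitzInv (hμ : QuasiDefinite μ) (n : ℕ) :
    hLn μ n * toeplitzInv μ n (Fin.last n) (Fin.last n) = 1 ∧
      toeplitzInv μ n (Fin.last n) (Fin.last n) * hLn μ n = 1 := by
  have hTW := hμ.toeplitz_mul_toeplitzInv n
  have hWT := hμ.toeplitzInv_mul_toeplitz n
  rw [hLn]
  split_ifs with h
  · have := schurLast_mul_inv_apply (hμ.isUnit_trunc n).1 hTW hWT _ (blockTrunc_gL μ (n + 1))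
    rwa [cmvPerm_last_of_even h] at this
  · have := schurLast_mul_inv_apply (hμ.isUnit_trunc n).2 hTW hWT _ (blockTrunc_gR μ (n + 1))
    rwa [Equiv.trans_apply, cmvPerm_last_of_odd (by omega), Fin.revPerm_apply, Fin.rev_zero] at this

theorem QuasiDefinite.hRn_mul_toeplitzInv (hμ : QuasiDefinite μ) (n : ℕ) :
    hRn μ n * toeplitzInv μ n 0 0 = 1 ∧ toeplitzInv μ n 0 0 * hRn μ n = 1 := by
  have hTW := hμ.toeplitz_mul_toeplitzInv n
  have hWT := hμ.toeplitzInv_mul_toeplitz n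
  rw [hRn]
  split_ifs with h
  · have := schurLast_mul_inv_apply (hμ.isUnit_trunc n).2 hTW hWT _ (blockTrunc_gR μ (n + 1))
    rwa [Equiv.trans_apply, cmvPerm_last_of_even h, Fin.revPerm_apply, Fin.rev_last] at this
  · have := schurLast_mul_inv_apply (hμ.isUnit_trunc n).1 hTW hWT _ (blockTrunc_gL μ (n + 1))
    rwa [cmvPerm_last_of_odd (by omega)] at this

theorem QuasiDefinite.toeplitzInv_zero_zero (hμ : QuasiDefinite μ) (n : ℕ) :
    toeplitzInv μ n 0 0 = toeplitzInv μ (n + 1) 0 0 -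
      toeplitzInv μ (n + 1) 0 (Fin.last (n + 1)) * hLn μ (n + 1) *
        toeplitzInv μ (n + 1) (Fin.last (n + 1)) 0 := by
  have hVM : toeplitzInv μ n * (toeplitz (rawMoment μ) (n + 2)).submatrix
      (Fin.last (n + 1)).succAbove (Fin.last (n + 1)).succAbove = 1 := by
    rw [Fin.succAbove_last, toeplitz_submatrix_castSucc, hμ.toeplitzInv_mul_toeplitz]
  have := inv_submatrix_succAbove_apply _ (hμ.toeplitz_mul_toeplitzInv (n + 1)) hVM
    (hμ.hLn_mul_toeplitzInv (n + 1)).2 0 0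
  simpa only [Fin.succAbove_last, Fin.castSucc_zero] using this

theorem QuasiDefinite.toeplitzInv_last_last (hμ : QuasiDefinite μ) (n : ℕ) :
    toeplitzInv μ n (Fin.last n) (Fin.last n) =
      toeplitzInv μ (n + 1) (Fin.last (n + 1)) (Fin.last (n + 1)) -
        toeplitzInv μ (n + 1) (Fin.last (n + 1)) 0 * hRn μ (n + 1) *
          toeplitzInv μ (n + 1) 0 (Fin.last (n + 1)) := by
  have hVM : toeplitzInv μ n * (toeplitz (rawMoment μ) (n + 2)).submatrix
      (0 : Fin (n + 2)).succAbove (0 : Fin (n + 2)).succAbove = 1 := by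
    rw [Fin.succAbove_zero, toeplitz_submatrix_succ, hμ.toeplitzInv_mul_toeplitz]
  have := inv_submatrix_succAbove_apply _ (hμ.toeplitz_mul_toeplitzInv (n + 1)) hVM
    (hμ.hRn_mul_toeplitzInv (n + 1)).2 (Fin.last n) (Fin.last n)
  simpa only [Fin.succAbove_zero, Fin.succ_last] using this

theorem verb_eq_apply_zero (p : ℕ → Mm m) (l : ℕ) : verb p l = p 0 := by
  simp [verb, pev, Finset.sum_range_succ']

variable {P : ℕ → ℕ → Mm m}

theorem IsSzL1.verb_eq (hμ : QuasiDefinite μ) (hP : IsSzL1 μ P) (n : ℕ) :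
    verb (P n) n = hLn μ n * toeplitzInv μ n (Fin.last n) 0 := by
  rw [verb_eq_apply_zero]
  refine eq_mul_inv_apply_of_vecMul_apply_eq_zero (x := fun k : Fin (n + 1) => P n k)
    (hμ.toeplitz_mul_toeplitzInv n) (fun j hj => ?_) (hP n).1.1 (hμ.hLn_mul_toeplitzInv n).2 0
  rw [← (hP n).2 j (Fin.val_lt_last hj), mInt_pev_zmon, ← Fin.sum_univ_eq_sum_range]
  simp [vecMul, dotProduct, toeplitz, sub_eq_add_neg]

theorem IsSzL2.verb_eq (hμ : QuasiDefinite μ) (hP : IsSzL2 μ P) (n : ℕ) :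
    (verb (P n) n)ᴴ = toeplitzInv μ n 0 (Fin.last n) * hLn μ n := by
  rw [verb_eq_apply_zero]
  refine eq_inv_apply_mul_of_mulVec_apply_eq_zero (y := fun k : Fin (n + 1) => (P n k)ᴴ)
    (hμ.toeplitzInv_mul_toeplitz n) (fun j hj => ?_) (by simp [(hP n).1.1])
    (hμ.hLn_mul_toeplitzInv n).1 0
  rw [← (hP n).2 j (Fin.val_lt_last hj), mInt_zmon_conjTranspose_pev, ← Fin.sum_univ_eq_sum_range]
  simp [mulVec, dotProduct, toeplitz]

theorem IsSzR1.verb_eq (hμ : QuasiDefinite μ) (hP : IsSzR1 μ P) (n : ℕ) :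
    verb (P n) n = toeplitzInv μ n (Fin.last n) 0 * hRn μ n := by
  rw [verb_eq_apply_zero]
  have hWT : (toeplitzInv μ n).submatrix Fin.rev Fin.rev *
      (toeplitz (rawMoment μ) (n + 1)).submatrix Fin.rev Fin.rev = 1 := by
    rw [← submatrix_mul _ _ _ _ _ Fin.rev_bijective, hμ.toeplitzInv_mul_toeplitz]
    exact submatrix_one_equiv Fin.revPerm
  have := eq_inv_apply_mul_of_mulVec_apply_eq_zero (y := fun k : Fin (n + 1) => P n k)
    (c := Fin.last n) hWT (fun j hj => ?_) (hP n).1.1 (t := hRn μ n)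
    (by simpa using (hμ.hRn_mul_toeplitzInv n).1) 0
  · simpa using this
  rw [toeplitz_submatrix_rev, ← (hP n).2 j (Fin.val_lt_last hj), mInt_zmon_pev,
    ← Fin.sum_univ_eq_sum_range]
  simp [mulVec, dotProduct, neg_add_eq_sub]

theorem IsSzR2.verb_eq (hμ : QuasiDefinite μ) (hP : IsSzR2 μ P) (n : ℕ) :
    (verb (P n) n)ᴴ = hRn μ n * toeplitzInv μ n 0 (Fin.last n) := by
  rw [verb_eq_apply_zero]
  have hTW : (toeplitz (rawMoment μ) (n + 1)).submatrix Fin.rev Fin.rev *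
      (toeplitzInv μ n).submatrix Fin.rev Fin.rev = 1 := by
    rw [← submatrix_mul _ _ _ _ _ Fin.rev_bijective, hμ.toeplitz_mul_toeplitzInv]
    exact submatrix_one_equiv Fin.revPerm
  have := eq_mul_inv_apply_of_vecMul_apply_eq_zero (x := fun k : Fin (n + 1) => (P n k)ᴴ)
    (c := Fin.last n) hTW (fun j hj => ?_) (by simp [(hP n).1.1]) (t := hRn μ n)
    (by simpa using (hμ.hRn_mul_toeplitzInv n).2) 0
  · simpa using this
  rw [toeplitz_submatrix_rev, ← (hP n).2 j (Fin.val_lt_last hj), mInt_conjTranspose_pev_zmon,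
    ← Fin.sum_univ_eq_sum_range]
  simp [vecMul, dotProduct]

end MOLPUC

open MOLPUC in
theorem Verblunsky_and_quasi_norm_relations_general
    (m : ℕ) (μ : MatMeas m) (hμ : QuasiDefinite μ)
    (PL1 PL2 PR1 PR2 : ℕ → ℕ → Mm m)
    (hPL1 : IsSzL1 μ PL1) (hPL2 : IsSzL2 μ PL2)
    (hPR1 : IsSzR1 μ PR1) (hPR2 : IsSzR2 μ PR2) :
    (∀ n : ℕ,
      hRn μ n * (verb (PL2 n) n)ᴴ = (verb (PR2 n) n)ᴴ * hLn μ n ∧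
      hLn μ n * verb (PR1 (n + 1)) (n + 1) = verb (PL1 (n + 1)) (n + 1) * hRn μ n ∧
      verb (PL1 n) n * hRn μ n = hLn μ n * verb (PR1 n) n ∧
      (verb (PR2 (n + 1)) (n + 1))ᴴ * hLn μ n = hRn μ n * (verb (PL2 (n + 1)) (n + 1))ᴴ) ∧
    (∀ (k : ℕ) (hk : 1 ≤ k),
      hLn μ k = (1 - verb (PL1 k) k * (verb (PR2 k) k)ᴴ) * hLn μ (k - 1) ∧
      hRn μ k = (1 - (verb (PR2 k) k)ᴴ * verb (PL1 k) k) * hRn μ (k - 1) ∧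
      hLn μ k = hLn μ (k - 1) * (1 - verb (PR1 k) k * (verb (PL2 k) k)ᴴ) ∧
      hRn μ k = hRn μ (k - 1) * (1 - (verb (PL2 k) k)ᴴ * verb (PR1 k) k)) := by
  have hL := hμ.hLn_mul_toeplitzInv
  have hR := hμ.hRn_mul_toeplitzInv
  have hLschur (n : ℕ) := hμ.toeplitzInv_last_last n ▸ hL n
  have hRschur (n : ℕ) := hμ.toeplitzInv_zero_zero n ▸ hR n
  simp only [hPL1.verb_eq hμ, hPL2.verb_eq hμ, hPR1.verb_eq hμ, hPR2.verb_eq hμ]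
  refine ⟨fun n => ⟨(mul_assoc ..).symm, ?_, mul_assoc .., ?_⟩, fun k hk => ?_⟩
  · exact mul_mul_eq_mul_mul_of_schur (hL (n + 1)).2 (hR (n + 1)).1 (hRschur n).2 (hLschur n).1
  · exact (mul_mul_eq_mul_mul_of_schur (hR (n + 1)).2 (hL (n + 1)).1 (hLschur n).2 (hRschur n).1).symm
  obtain ⟨n, rfl⟩ := Nat.exists_eq_add_of_le' hk
  rw [Nat.add_sub_cancel]
  exact ⟨eq_one_sub_mul_mul_of_mul_eq_one (hL (n + 1)).1 (hLschur n).2,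
    eq_one_sub_mul_mul_of_mul_eq_one (hR (n + 1)).1 (hRschur n).2,
    eq_mul_one_sub_mul_of_mul_eq_one (hL (n + 1)).2 (hLschur n).1,
    eq_mul_one_sub_mul_of_mul_eq_one (hR (n + 1)).2 (hRschur n).1⟩

open MOLPUC in
/-- relations among the Verblunsky matrices and the matrix
quasi-norms of the Szegő polynomials. -/
theorem Verblunsky_and_quasi_norm_relations
    (m : ℕ) (hm : 1 ≤ m) (μ : MatMeas m) (hμ : QuasiDefinite μ)
    (PL1 PL2 PR1 PR2 : ℕ → ℕ → Mm m)
    (hPL1 : IsSzL1 μ PL1) (hPL2 : IsSzL2 μ PL2)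
    (hPR1 : IsSzR1 μ PR1) (hPR2 : IsSzR2 μ PR2) :
    (∀ n : ℕ,
      hRn μ n * (verb (PL2 n) n)ᴴ = (verb (PR2 n) n)ᴴ * hLn μ n ∧
      hLn μ n * verb (PR1 (n + 1)) (n + 1) = verb (PL1 (n + 1)) (n + 1) * hRn μ n ∧
      verb (PL1 n) n * hRn μ n = hLn μ n * verb (PR1 n) n ∧
      (verb (PR2 (n + 1)) (n + 1))ᴴ * hLn μ n = hRn μ n * (verb (PL2 (n + 1)) (n + 1))ᴴ) ∧
    (∀ (k : ℕ) (hk : 1 ≤ k),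
      hLn μ k = (1 - verb (PL1 k) k * (verb (PR2 k) k)ᴴ) * hLn μ (k - 1) ∧
      hRn μ k = (1 - (verb (PR2 k) k)ᴴ * verb (PL1 k) k) * hRn μ (k - 1) ∧
      hLn μ k = hLn μ (k - 1) * (1 - verb (PR1 k) k * (verb (PL2 k) k)ᴴ) ∧
      hRn μ k = hRn μ (k - 1) * (1 - (verb (PL2 k) k)ᴴ * verb (PR1 k) k)) :=
  Verblunsky_and_quasi_norm_relations_general m μ hμ PL1 PL2 PR1 PR2 hPL1 hPL2 hPR1 hPR2
end
end
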